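/- arXiv:0905.3902 — 3 statements merged into one kernel-verified Lean document; each statement's English description precedes it below -/
import Mathlib

section
/- Let f_n : [a,b] → ℝ be a sequence of convex piecewise-linear functions, each of whose slopes lies in the finite set {2πk : k ∈ ℤ, |k| ≤ k₀}, and suppose f_n converges pointwise to f. Then f is convex and piecewise linear with all slopes of the form 2πk for some integer k with |k| ≤ k₀. -/
open Filter Set

/-- f is piecewise linear on [a,b] with all slopes belonging to S: there is a finite
partition a = t₀ < t₁ < ⋯ < t_N = b on each piece of which f is affine with slope in S. -/
def PiecewiseLinearWithSlopes (S : Set ℝ) (a b : ℝ) (f : ℝ → ℝ) : Prop :=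
  ∃ N : ℕ, 0 < N ∧ ∃ t : ℕ → ℝ, t 0 = a ∧ t N = b ∧ (∀ i, i < N → t i < t (i + 1)) ∧
    ∀ i, i < N → ∃ c s : ℝ, s ∈ S ∧ ∀ x ∈ Set.Icc (t i) (t (i + 1)), f x = c + s * x

open Topology

/-! Every affine piece of a convex function extends to a supporting line, so a convex function
that is piecewise linear with slopes in a finite set `S` is, on `[a, b]`, the maximum over
`s ∈ S` of `c s + s * x`, where `c s` is the infimum of `f y - s * y` over `[a, b]`.
For the sequence `f n` these intercepts lie between `f n a - s * a - 2 * M * (b - a)` and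
`f n a - s * a` (`M` bounding the slopes), so a subsequence of them converges, and the limit `g`
is again a maximum of finitely many lines with slopes in `S`. Such a maximum is piecewise
linear: between consecutive crossing points of two of the lines a single line stays on top.
Convexity passes to pointwise limits directly. -/

section Partition

variable {α : Type*} [LinearOrder α]

theorem Icc_succ_subset_Icc_of_lt_succ {t : ℕ → α} {N : ℕ} (hstep : ∀ i < N, t i < t (i + 1))
    {i : ℕ} (hi : i < N) : Icc (t i) (t (i + 1)) ⊆ Icc (t 0) (t N) := by
  have hmono := (strictMonoOn_Iic_of_lt_succ (ψ := t) hstep).monotoneOn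
  exact Icc_subset_Icc (hmono (mem_Iic.2 (Nat.zero_le N)) (mem_Iic.2 hi.le) (Nat.zero_le i))
    (hmono (mem_Iic.2 hi) (mem_Iic.2 le_rfl) hi)

theorem exists_lt_mem_Icc_succ {t : ℕ → α} {N : ℕ} (hN : 0 < N) {x : α}
    (hx : x ∈ Icc (t 0) (t N)) : ∃ i < N, x ∈ Icc (t i) (t (i + 1)) := by
  induction N with
  | zero => exact absurd hN (lt_irrefl 0)
  | succ N ih =>
    rcases Nat.eq_zero_or_pos N with rfl | hpos
    · exact ⟨0, Nat.zero_lt_one, hx⟩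
    rcases le_or_gt x (t N) with h | h
    · obtain ⟨i, hi, hxi⟩ := ih hpos ⟨hx.1, h⟩
      exact ⟨i, Nat.lt_succ_of_lt hi, hxi⟩
    · exact ⟨N, Nat.lt_succ_self N, h.le, hx.2⟩

theorem Finset.exists_partition_Icc {T : Finset α} {a b : α} (hab : a < b) (ha : a ∈ T)
    (hb : b ∈ T) (hT : ∀ z ∈ T, z ∈ Set.Icc a b) :
    ∃ N, 0 < N ∧ ∃ t : ℕ → α, t 0 = a ∧ t N = b ∧ (∀ i < N, t i < t (i + 1)) ∧
      ∀ i < N, ∀ z ∈ T, z ∉ Set.Ioo (t i) (t (i + 1)) := by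
  have hcard : 1 < T.card := Finset.one_lt_card.2 ⟨a, ha, b, hb, hab.ne⟩
  set e := T.orderEmbOfFin rfl
  set t : ℕ → α := fun i => if h : i < T.card then e ⟨i, h⟩ else b
  have ht : ∀ i (h : i < T.card), t i = e ⟨i, h⟩ := fun i h => dif_pos h
  refine ⟨T.card - 1, by omega, t, ?_, ?_, fun i hi => ?_, fun i hi z hz => ?_⟩
  · rw [ht 0 (by omega), Finset.orderEmbOfFin_zero rfl (by omega)]
    exact le_antisymm (T.min'_le a ha) (T.le_min' _ _ fun z hz => (hT z hz).1)
  · rw [ht _ (by omega), Finset.orderEmbOfFin_last rfl (by omega)]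
    exact le_antisymm (T.max'_le _ _ fun z hz => (hT z hz).2) (T.le_max' b hb)
  · rw [ht i (by omega), ht (i + 1) (by omega)]
    exact e.strictMono (Fin.mk_lt_mk.2 (Nat.lt_succ_self i))
  · obtain ⟨j, rfl⟩ : z ∈ Set.range e := by rw [Finset.range_orderEmbOfFin]; exact hz
    rw [ht i (by omega), ht (i + 1) (by omega)]
    rintro ⟨hij, hji⟩
    have := e.lt_iff_lt.1 hij
    have := e.lt_iff_lt.1 hji
    simp only [Fin.lt_def] at *
    omega

end Partition

theorem PiecewiseLinearWithSlopes.exists_piece {S : Set ℝ} {a b : ℝ} {f : ℝ → ℝ}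
    (hf : PiecewiseLinearWithSlopes S a b f) {x : ℝ} (hx : x ∈ Icc a b) :
    ∃ u v c, ∃ s ∈ S, Icc u v ⊆ Icc a b ∧ u < v ∧ x ∈ Icc u v ∧
      ∀ y ∈ Icc u v, f y = c + s * y := by
  obtain ⟨N, hN, t, rfl, rfl, hstep, hpiece⟩ := hf
  obtain ⟨i, hi, hxi⟩ := exists_lt_mem_Icc_succ hN hx
  obtain ⟨c, s, hs, hcs⟩ := hpiece i hi
  exact ⟨t i, t (i + 1), c, s, hs, Icc_succ_subset_Icc_of_lt_succ hstep hi, hstep i hi, hxi, hcs⟩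

theorem ConvexOn.affine_le_of_eqOn_Icc {a b u v c s : ℝ} {f : ℝ → ℝ}
    (hf : ConvexOn ℝ (Icc a b) f) (huv : u < v) (hsub : Icc u v ⊆ Icc a b)
    (haff : ∀ x ∈ Icc u v, f x = c + s * x) : ∀ y ∈ Icc a b, c + s * y ≤ f y := by
  have hu : u ∈ Icc u v := left_mem_Icc.2 huv.le
  have hv : v ∈ Icc u v := right_mem_Icc.2 huv.le
  have hslope : (f v - f u) / (v - u) = s := by
    rw [haff u hu, haff v hv, div_eq_iff (sub_ne_zero.2 huv.ne')]
    ring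
  intro y hy
  rcases lt_or_ge y u with hyu | hyu
  · have h := hf.slope_mono_adjacent hy (hsub hv) hyu huv
    rw [hslope, div_le_iff₀ (sub_pos.2 hyu)] at h
    linarith [haff u hu]
  rcases le_or_gt y v with hyv | hvy
  · exact (haff y ⟨hyu, hyv⟩).ge
  · have h := hf.slope_mono_adjacent (hsub hu) hy huv hvy
    rw [hslope, le_div_iff₀ (sub_pos.2 hvy)] at h
    linarith [haff v hv]

theorem ConvexOn.exists_supporting_affine {S : Set ℝ} {a b : ℝ} {f : ℝ → ℝ}
    (hf : ConvexOn ℝ (Icc a b) f) (hpl : PiecewiseLinearWithSlopes S a b f) {x : ℝ}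
    (hx : x ∈ Icc a b) : ∃ c, ∃ s ∈ S, f x = c + s * x ∧ ∀ y ∈ Icc a b, c + s * y ≤ f y := by
  obtain ⟨u, v, c, s, hs, hsub, huv, hxuv, haff⟩ := hpl.exists_piece hx
  exact ⟨c, s, hs, haff x hxuv, hf.affine_le_of_eqOn_Icc huv hsub haff⟩

theorem ConvexOn.le_sub_mul_of_piecewiseLinear {S : Set ℝ} {a b M s : ℝ} {f : ℝ → ℝ}
    (hf : ConvexOn ℝ (Icc a b) f) (hpl : PiecewiseLinearWithSlopes S a b f) (hab : a ≤ b)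
    (hM : ∀ s ∈ S, |s| ≤ M) (hs : |s| ≤ M) :
    ∀ y ∈ Icc a b, f a - s * a - 2 * M * (b - a) ≤ f y - s * y := by
  obtain ⟨c, s', hs', hfa, hc⟩ := hf.exists_supporting_affine hpl (left_mem_Icc.2 hab)
  intro y hy
  have hslopes : -(2 * M) ≤ s' - s := by
    linarith [neg_abs_le s', le_abs_self s, hM s' hs']
  have hM0 : 0 ≤ M := (abs_nonneg s).trans hs
  nlinarith [hc y hy, mul_nonneg (neg_le_iff_add_nonneg.1 hslopes) (sub_nonneg.2 hy.1),
    mul_nonneg hM0 (sub_nonneg.2 hy.2)]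

section LowerIntercept

variable {D : Set ℝ} {f : ℝ → ℝ} {c s x : ℝ}

/-- Minus the Legendre transform of `f` restricted to `D`, evaluated at the slope `s`. -/
noncomputable def lowerIntercept (D : Set ℝ) (f : ℝ → ℝ) (s : ℝ) : ℝ :=
  sInf ((fun y => f y - s * y) '' D)

theorem lowerIntercept_le (hbdd : BddBelow ((fun y => f y - s * y) '' D)) (hx : x ∈ D) :
    lowerIntercept D f s ≤ f x - s * x :=
  csInf_le hbdd (mem_image_of_mem _ hx)

theorem le_lowerIntercept (hD : D.Nonempty) (h : ∀ y ∈ D, c ≤ f y - s * y) :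
    c ≤ lowerIntercept D f s :=
  le_csInf (hD.image _) (forall_mem_image.2 h)

theorem eq_sup'_lowerIntercept {S : Finset ℝ} (hS : S.Nonempty)
    (hsupp : ∀ x ∈ D, ∃ c, ∃ s ∈ S, f x = c + s * x ∧ ∀ y ∈ D, c + s * y ≤ f y)
    (hbdd : ∀ s ∈ S, BddBelow ((fun y => f y - s * y) '' D)) (hx : x ∈ D) :
    f x = S.sup' hS (fun s => lowerIntercept D f s + s * x) := by
  obtain ⟨c, s, hs, hfx, hc⟩ := hsupp x hx
  refine le_antisymm ?_ (Finset.sup'_le _ _ fun s hs =>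
    le_sub_iff_add_le.1 (lowerIntercept_le (hbdd s hs) hx))
  calc f x = c + s * x := hfx
    _ ≤ lowerIntercept D f s + s * x := by
      gcongr
      exact le_lowerIntercept ⟨x, hx⟩ fun y hy => le_sub_iff_add_le.2 (hc y hy)
    _ ≤ _ := Finset.le_sup' (fun s => lowerIntercept D f s + s * x) hs

end LowerIntercept

theorem exists_eq_sup'_on_Icc {S : Finset ℝ} (hS : S.Nonempty) (C : ℝ → ℝ) {u v : ℝ}
    (huv : u < v) (hcross : ∀ s ∈ S, ∀ s' ∈ S, (C s' - C s) / (s - s') ∉ Ioo u v) :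
    ∃ s ∈ S, ∀ x ∈ Icc u v, S.sup' hS (fun s => C s + s * x) = C s + s * x := by
  obtain ⟨s, hs, hmax⟩ := S.exists_max_image (fun s => C s + s * ((u + v) / 2)) hS
  refine ⟨s, hs, fun x hx => le_antisymm (Finset.sup'_le _ _ fun s' hs' => ?_)
    (Finset.le_sup' (fun s => C s + s * x) hs)⟩
  by_contra hlt
  push Not at hlt
  have hmid := hmax s' hs'
  have hne : s - s' ≠ 0 := fun h => by
    rw [sub_eq_zero] at h
    subst h
    linarith
  set z := (C s' - C s) / (s - s')
  -- the lines of slopes `s` and `s'` cross at `z`; as `s'` wins at `x` but not at the midpoint,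
  -- `z` lies between the two, hence in `Ioo u v`
  have hz : ∀ y, (s - s') * (z - y) = C s' + s' * y - (C s + s * y) := fun y => by
    rw [mul_sub, mul_div_cancel₀ _ hne]
    ring
  have hx' : 0 < (s - s') * (z - x) := by rw [hz]; linarith
  have hm' : (s - s') * (z - (u + v) / 2) ≤ 0 := by rw [hz]; linarith
  rcases hne.lt_or_gt with hneg | hpos
  · have hzx : z < x := by nlinarith
    have hmz : (u + v) / 2 ≤ z := by nlinarith
    exact hcross s hs s' hs' ⟨by linarith, by linarith [hx.2]⟩
  · have hxz : x < z := by nlinarith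
    have hzm : z ≤ (u + v) / 2 := by nlinarith
    exact hcross s hs s' hs' ⟨by linarith [hx.1], by linarith⟩

theorem piecewiseLinearWithSlopes_of_eqOn_sup' {S : Finset ℝ} (hS : S.Nonempty) (C : ℝ → ℝ)
    {a b : ℝ} (hab : a < b) {g : ℝ → ℝ}
    (hg : ∀ x ∈ Icc a b, g x = S.sup' hS (fun s => C s + s * x)) :
    PiecewiseLinearWithSlopes ↑S a b g := by
  classical
  set T := insert a (insert b
    (((S ×ˢ S).image fun p => (C p.2 - C p.1) / (p.1 - p.2)).filter (· ∈ Icc a b)))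
  have hT : ∀ z ∈ T, z ∈ Icc a b := by
    simp only [T, Finset.mem_insert, Finset.mem_filter]
    rintro z (rfl | rfl | ⟨-, hz⟩)
    exacts [left_mem_Icc.2 hab.le, right_mem_Icc.2 hab.le, hz]
  obtain ⟨N, hN, t, ht0, htN, hstep, hgap⟩ :=
    T.exists_partition_Icc hab (by simp [T]) (by simp [T]) hT
  refine ⟨N, hN, t, ht0, htN, hstep, fun i hi => ?_⟩
  have hsub : Icc (t i) (t (i + 1)) ⊆ Icc a b :=
    ht0 ▸ htN ▸ Icc_succ_subset_Icc_of_lt_succ hstep hi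
  obtain ⟨s, hs, hsup⟩ := exists_eq_sup'_on_Icc hS C (hstep i hi) fun s hs s' hs' hz =>
    hgap i hi _ (Finset.mem_insert_of_mem <| Finset.mem_insert_of_mem <| Finset.mem_filter.2
      ⟨Finset.mem_image.2 ⟨(s, s'), Finset.mem_product.2 ⟨hs, hs'⟩, rfl⟩,
        hsub (Ioo_subset_Icc_self hz)⟩) hz
  exact ⟨C s, s, hs, fun x hx => (hg x (hsub hx)).trans (hsup x hx)⟩

theorem exists_subseq_tendsto_of_mem_Icc {ι : Type*} (S : Finset ι) {c : ℕ → ι → ℝ}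
    {lo hi : ι → ℝ} (h : ∀ n, ∀ s ∈ S, c n s ∈ Icc (lo s) (hi s)) :
    ∃ C : ι → ℝ, ∃ φ : ℕ → ℕ, StrictMono φ ∧
      ∀ s ∈ S, Tendsto (fun n => c (φ n) s) atTop (𝓝 (C s)) := by
  classical
  obtain ⟨W, -, φ, hφ, hW⟩ :=
    (isCompact_Icc (a := fun s : S => lo s) (b := fun s => hi s)).tendsto_subseq
      (x := fun n (s : S) => c n s) fun n => ⟨fun s => (h n s s.2).1, fun s => (h n s s.2).2⟩
  refine ⟨fun s => if hs : s ∈ S then W ⟨s, hs⟩ else 0, φ, hφ, fun s hs => ?_⟩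
  simpa [hs] using tendsto_pi_nhds.1 hW ⟨s, hs⟩

theorem convexOn_of_tendsto {ι E : Type*} [AddCommMonoid E] [Module ℝ E] {l : Filter ι}
    [l.NeBot] {D : Set E} {f : ι → E → ℝ} {g : E → ℝ} (hf : ∀ i, ConvexOn ℝ D (f i))
    (hlim : ∀ x ∈ D, Tendsto (fun i => f i x) l (𝓝 (g x))) : ConvexOn ℝ D g := by
  obtain ⟨i⟩ := l.nonempty_of_neBot
  refine ⟨(hf i).1, fun x hx y hy α β hα hβ hαβ => ?_⟩
  exact le_of_tendsto_of_tendsto' (hlim _ ((hf i).1 hx hy hα hβ hαβ))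
    (((hlim x hx).const_smul α).add ((hlim y hy).const_smul β))
    fun i => (hf i).2 hx hy hα hβ hαβ

theorem PiecewiseLinearWithSlopes.of_tendsto {S : Finset ℝ} {a b : ℝ} (hab : a < b)
    {f : ℕ → ℝ → ℝ} {g : ℝ → ℝ} (hconv : ∀ n, ConvexOn ℝ (Icc a b) (f n))
    (hpl : ∀ n, PiecewiseLinearWithSlopes ↑S a b (f n))
    (hlim : ∀ x ∈ Icc a b, Tendsto (fun n => f n x) atTop (𝓝 (g x))) :
    PiecewiseLinearWithSlopes ↑S a b g := by
  have ha : a ∈ Icc a b := left_mem_Icc.2 hab.le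
  obtain ⟨-, s₀, hs₀, -⟩ := (hconv 0).exists_supporting_affine (hpl 0) ha
  have hS : S.Nonempty := ⟨s₀, hs₀⟩
  have hM : ∀ s ∈ (S : Set ℝ), |s| ≤ S.sup' hS abs := fun s hs => S.le_sup' abs hs
  set c : ℕ → ℝ → ℝ := fun n => lowerIntercept (Icc a b) (f n)
  have hlow n s (hs : s ∈ S) := (hconv n).le_sub_mul_of_piecewiseLinear (hpl n) hab.le hM (hM s hs)
  have hbdd n s (hs : s ∈ S) : BddBelow ((fun y => f n y - s * y) '' Icc a b) :=
    ⟨_, forall_mem_image.2 (hlow n s hs)⟩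
  have hrep n x (hx : x ∈ Icc a b) : f n x = S.sup' hS (fun s => c n s + s * x) :=
    eq_sup'_lowerIntercept hS (fun x hx => (hconv n).exists_supporting_affine (hpl n) hx)
      (hbdd n) hx
  obtain ⟨A, hA⟩ := (hlim a ha).bddBelow_range
  obtain ⟨B, hB⟩ := (hlim a ha).bddAbove_range
  -- the intercepts are pinned near `f n a - s * a`, which stays bounded
  have hbounds n s (hs : s ∈ S) :
      c n s ∈ Icc (A - s * a - 2 * S.sup' hS abs * (b - a)) (B - s * a) :=
    ⟨le_lowerIntercept ⟨a, ha⟩ fun y hy => by linarith [hlow n s hs y hy, hA (mem_range_self n)],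
      (lowerIntercept_le (hbdd n s hs) ha).trans (by linarith [hB (mem_range_self n)])⟩
  obtain ⟨C, φ, hφ, hC⟩ := exists_subseq_tendsto_of_mem_Icc S hbounds
  refine piecewiseLinearWithSlopes_of_eqOn_sup' hS C hab fun x hx =>
    tendsto_nhds_unique ((hlim x hx).comp hφ.tendsto_atTop) ?_
  exact (Tendsto.finset_sup'_nhds_apply hS fun s hs => (hC s hs).add_const (s * x)).congr
    fun n => (hrep (φ n) x hx).symm

/-- A pointwise limit of convex piecewise-linear functions on [a,b], all of whose
slopes lie in {2πk : k ∈ ℤ, |k| ≤ k₀}, is itself convex and piecewise linear with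
slopes in that set. -/
theorem limit_convex_piecewise_linear (a b : ℝ) (hab : a < b) (k₀ : ℕ)
    (f : ℕ → ℝ → ℝ) (g : ℝ → ℝ)
    (hconv : ∀ n, ConvexOn ℝ (Set.Icc a b) (f n))
    (hpl : ∀ n, PiecewiseLinearWithSlopes
      {s : ℝ | ∃ k : ℤ, |k| ≤ (k₀ : ℤ) ∧ s = 2 * Real.pi * k} a b (f n))
    (hlim : ∀ x ∈ Set.Icc a b, Tendsto (fun n => f n x) atTop (nhds (g x))) :
    ConvexOn ℝ (Set.Icc a b) g ∧
      PiecewiseLinearWithSlopes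
        {s : ℝ | ∃ k : ℤ, |k| ≤ (k₀ : ℤ) ∧ s = 2 * Real.pi * k} a b g := by
  have hslopes : {s : ℝ | ∃ k : ℤ, |k| ≤ (k₀ : ℤ) ∧ s = 2 * Real.pi * k} =
      ↑((Finset.Icc (-(k₀ : ℤ)) k₀).image fun k : ℤ => 2 * Real.pi * k) := by
    ext s
    simp [abs_le, eq_comm]
  rw [hslopes] at hpl ⊢
  exact ⟨convexOn_of_tendsto hconv hlim, .of_tendsto hab hconv hpl hlim⟩
end

section
/- Let f : [a,b] → ℝ be convex, and suppose that for every ε > 0 there exists a convex function g (depending on ε) that is piecewise linear with slopes in a fixed finite set S ⊂ ℝ and satisfies sup |f − g| ≤ ε. Then f itself is piecewise linear with all slopes in S. -/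
open Filter Set

set_option linter.unusedSectionVars false
set_option linter.unusedVariables false

/-- nodes are monotone -/
lemma nodes_mono {t : ℕ → ℝ} {N : ℕ} (ht : ∀ i, i < N → t i ≤ t (i + 1)) :
    ∀ i j, i ≤ j → j ≤ N → t i ≤ t j := by
  intro i j hij hjN
  induction j with
  | zero => simp_all
  | succ k ih =>
    rcases Nat.lt_or_ge i (k+1) with h | h
    · have : t i ≤ t k := ih (Nat.lt_succ_iff.mp h) (le_trans (Nat.le_succ k) hjN)
      exact this.trans (ht k (Nat.lt_of_succ_le hjN))
    · have : i = k + 1 := le_antisymm hij h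
      simp [this]

/-- glueing monotonicity along a partition -/
lemma monotoneOn_glue (h : ℝ → ℝ) (t : ℕ → ℝ) (N : ℕ)
    (ht : ∀ i, i < N → t i ≤ t (i + 1))
    (hm : ∀ i, i < N → MonotoneOn h (Set.Icc (t i) (t (i + 1)))) :
    MonotoneOn h (Set.Icc (t 0) (t N)) := by
  induction N with
  | zero =>
    intro x hx y hy hxy
    have : x = y := le_antisymm hxy (hy.2.trans hx.1)
    simp [this]
  | succ n ih =>
    have ht' : ∀ i, i < n → t i ≤ t (i + 1) := fun i hi => ht i (hi.trans (Nat.lt_succ_self n))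
    have ihn : MonotoneOn h (Set.Icc (t 0) (t n)) :=
      ih ht' (fun i hi => hm i (hi.trans (Nat.lt_succ_self n)))
    have h0n : t 0 ≤ t n := nodes_mono ht' 0 n (Nat.zero_le n) le_rfl
    have hlast := hm n (Nat.lt_succ_self n)
    intro x hx y hy hxy
    rcases le_total y (t n) with hy' | hy'
    · exact ihn ⟨hx.1, hxy.trans hy'⟩ ⟨hy.1, hy'⟩ hxy
    · rcases le_total x (t n) with hx' | hx'
      · have h1 : h x ≤ h (t n) := ihn ⟨hx.1, hx'⟩ ⟨h0n, le_rfl⟩ hx'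
        have h2 : h (t n) ≤ h y := hlast ⟨le_rfl, ht n (Nat.lt_succ_self n)⟩ ⟨hy', hy.2⟩ hy'
        exact h1.trans h2
      · exact hlast ⟨hx', hx.2⟩ ⟨hy', hy.2⟩ hxy

/-- slope bounds for a PL function with slopes in S -/
lemma pl_diff_bounds {S : Set ℝ} {a b : ℝ} {g : ℝ → ℝ}
    (hg : PiecewiseLinearWithSlopes S a b g) {m M : ℝ}
    (hm : ∀ s ∈ S, m ≤ s) (hM : ∀ s ∈ S, s ≤ M) :
    ∀ x ∈ Set.Icc a b, ∀ y ∈ Set.Icc a b, x ≤ y →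
      m * (y - x) ≤ g y - g x ∧ g y - g x ≤ M * (y - x) := by
  obtain ⟨N, hN0, t, ht0, htN, hts, hpieces⟩ := hg
  have ht : ∀ i, i < N → t i ≤ t (i + 1) := fun i hi => (hts i hi).le
  have hup : MonotoneOn (fun x => M * x - g x) (Set.Icc (t 0) (t N)) := by
    apply monotoneOn_glue _ _ _ ht
    intro i hi
    obtain ⟨c, s, hsS, hcs⟩ := hpieces i hi
    intro x hx y hy hxy
    simp only
    rw [hcs x hx, hcs y hy]
    nlinarith [hM s hsS]
  have hlo : MonotoneOn (fun x => g x - m * x) (Set.Icc (t 0) (t N)) := by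
    apply monotoneOn_glue _ _ _ ht
    intro i hi
    obtain ⟨c, s, hsS, hcs⟩ := hpieces i hi
    intro x hx y hy hxy
    simp only
    rw [hcs x hx, hcs y hy]
    nlinarith [hm s hsS]
  intro x hx y hy hxy
  rw [ht0, htN] at hup hlo
  constructor
  · have := hlo hx hy hxy
    simp only at this
    linarith
  · have := hup hx hy hxy
    simp only at this
    linarith

/-- locate the piece containing an interior point -/
lemma exists_piece {a b : ℝ} {t : ℕ → ℝ} {N : ℕ}
    (ht0 : t 0 = a) (htN : t N = b) (hts : ∀ i, i < N → t i < t (i + 1))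
    {u : ℝ} (hu : a ≤ u) (hub : u < b) :
    ∃ i, i < N ∧ t i ≤ u ∧ u < t (i + 1) := by
  classical
  set P : ℕ → Prop := fun i => t i ≤ u with hP
  have hP0 : P 0 := by rw [hP]; simp [ht0, hu]
  set i := Nat.findGreatest P N with hi
  have hPi : P i := Nat.findGreatest_spec (Nat.zero_le N) hP0
  have hiN : i ≤ N := Nat.findGreatest_le N
  have hilt : i < N := by
    rcases lt_or_eq_of_le hiN with h | h
    · exact h
    · exfalso; rw [hP, h, htN] at hPi; exact absurd hPi (not_le.mpr hub)
  refine ⟨i, hilt, hPi, ?_⟩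
  by_contra hcon
  push_neg at hcon
  exact (Nat.findGreatest_is_greatest (Nat.lt_succ_of_le le_rfl) hilt) hcon

/-- For a convex PL function g and x < u < y in [a,b] there is a slope s ∈ S
separating the secant slopes on [x,u] and [u,y]. -/
lemma pl_slope_between {S : Set ℝ} {a b : ℝ} {g : ℝ → ℝ}
    (hgc : ConvexOn ℝ (Set.Icc a b) g) (hg : PiecewiseLinearWithSlopes S a b g)
    {x u y : ℝ} (hx : x ∈ Set.Icc a b) (hy : y ∈ Set.Icc a b)
    (hxu : x < u) (huy : u < y) :
    ∃ s ∈ S, (g u - g x) / (u - x) ≤ s ∧ s ≤ (g y - g u) / (y - u) := by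
  obtain ⟨N, hN0, t, ht0, htN, hts, hpieces⟩ := hg
  have hua : a ≤ u := le_trans hx.1 hxu.le
  have hub : u < b := lt_of_lt_of_le huy hy.2
  obtain ⟨i, hiN, hti, hti1⟩ := exists_piece ht0 htN hts hua hub
  obtain ⟨c, s, hsS, hcs⟩ := hpieces i hiN
  set w := min y (t (i + 1)) with hw
  have huw : u < w := lt_min huy hti1
  have hwy : w ≤ y := min_le_left _ _
  have hwb : w ≤ b := hwy.trans hy.2
  have huI : u ∈ Set.Icc a b := ⟨hua, hub.le⟩
  have hwI : w ∈ Set.Icc a b := ⟨hua.trans huw.le, hwb⟩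
  have hgu : g u = c + s * u := hcs u ⟨hti, hti1.le⟩
  have hgw : g w = c + s * w := hcs w ⟨hti.trans huw.le, min_le_right _ _⟩
  have hsw : (g w - g u) / (w - u) = s := by
    rw [hgu, hgw, div_eq_iff (ne_of_gt (by linarith : (0:ℝ) < w - u))]
    ring
  refine ⟨s, hsS, ?_, ?_⟩
  · have := hgc.slope_mono_adjacent hx hwI hxu huw
    rwa [hsw] at this
  · rcases lt_or_eq_of_le hwy with hlt | heq
    · have := hgc.secant_mono_aux2 huI hy huw hlt
      rwa [hsw] at this
    · rw [← hsw, heq]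

noncomputable def rder (f : ℝ → ℝ) (b x : ℝ) : ℝ :=
  sInf ((fun y => (f y - f x) / (y - x)) '' Set.Ioc x b)

section rderSec
variable {a b : ℝ} {f : ℝ → ℝ} {m M : ℝ}
  (hfb : ∀ x ∈ Set.Icc a b, ∀ y ∈ Set.Icc a b, x ≤ y →
      m * (y - x) ≤ f y - f x ∧ f y - f x ≤ M * (y - x))

include hfb

lemma slope_bddBelow {x : ℝ} (hx : x ∈ Set.Ico a b) :
    m ∈ lowerBounds ((fun y => (f y - f x) / (y - x)) '' Set.Ioc x b) := by
  rintro r ⟨y, hy, rfl⟩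
  have hxI : x ∈ Set.Icc a b := ⟨hx.1, hx.2.le⟩
  have hyI : y ∈ Set.Icc a b := ⟨hx.1.trans hy.1.le, hy.2⟩
  have h := (hfb x hxI y hyI hy.1.le).1
  have hyx : 0 < y - x := by linarith [hy.1]
  rw [le_div_iff₀ hyx]
  linarith

lemma rder_le_slope {x : ℝ} (hx : x ∈ Set.Ico a b) {y : ℝ} (hy : y ∈ Set.Ioc x b) :
    rder f b x ≤ (f y - f x) / (y - x) :=
  csInf_le ⟨m, slope_bddBelow hfb hx⟩ ⟨y, hy, rfl⟩

lemma m_le_rder {x : ℝ} (hx : x ∈ Set.Ico a b) : m ≤ rder f b x := by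
  have hne : ((fun y => (f y - f x) / (y - x)) '' Set.Ioc x b).Nonempty :=
    ⟨_, ⟨b, ⟨hx.2, le_refl b⟩, rfl⟩⟩
  rw [rder]
  exact le_csInf hne (fun r hr => slope_bddBelow hfb hx hr)

lemma exists_slope_lt {x : ℝ} (hx : x ∈ Set.Ico a b) {ρ : ℝ} (hρ : 0 < ρ) :
    ∃ y ∈ Set.Ioc x b, (f y - f x) / (y - x) < rder f b x + ρ := by
  have hne : ((fun y => (f y - f x) / (y - x)) '' Set.Ioc x b).Nonempty :=
    ⟨_, ⟨b, ⟨hx.2, le_refl b⟩, rfl⟩⟩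
  have : sInf ((fun y => (f y - f x) / (y - x)) '' Set.Ioc x b) < rder f b x + ρ := by
    rw [← rder]; linarith
  obtain ⟨r, ⟨y, hy, rfl⟩, hr⟩ := exists_lt_of_csInf_lt hne this
  exact ⟨y, hy, hr⟩

end rderSec

/-- monotonicity of the right slope-infimum -/
lemma rder_mono {a b : ℝ} {f : ℝ → ℝ} {m M : ℝ}
    (hfb : ∀ x ∈ Set.Icc a b, ∀ y ∈ Set.Icc a b, x ≤ y →
      m * (y - x) ≤ f y - f x ∧ f y - f x ≤ M * (y - x))
    (hconv : ConvexOn ℝ (Set.Icc a b) f)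
    {x x' : ℝ} (hx : x ∈ Set.Ico a b) (hx' : x' ∈ Set.Ico a b) (hxx : x ≤ x') :
    rder f b x ≤ rder f b x' := by
  have hne : ((fun y => (f y - f x') / (y - x')) '' Set.Ioc x' b).Nonempty :=
    ⟨_, ⟨b, ⟨hx'.2, le_refl b⟩, rfl⟩⟩
  conv_rhs => rw [rder]
  apply le_csInf hne
  rintro r ⟨w, hw, rfl⟩
  have hxw : x < w := lt_of_le_of_lt hxx hw.1
  have h1 : rder f b x ≤ (f w - f x) / (w - x) :=
    rder_le_slope hfb hx ⟨hxw, hw.2⟩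
  rcases eq_or_lt_of_le hxx with rfl | hlt
  · exact h1
  · have hxI : x ∈ Set.Icc a b := ⟨hx.1, hx.2.le⟩
    have hwI : w ∈ Set.Icc a b := ⟨hx.1.trans hxw.le, hw.2⟩
    have h2 : (f w - f x) / (w - x) ≤ (f w - f x') / (w - x') :=
      hconv.secant_mono_aux3 hxI hwI hlt hw.1
    exact h1.trans h2

/-- The key approximation lemma: the right slope-infimum of f lies in S. -/
lemma rder_mem_S {a b : ℝ} {S : Set ℝ} (hS : S.Finite) (hSne : S.Nonempty)
    {f : ℝ → ℝ} {m M : ℝ}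
    (hfb : ∀ x ∈ Set.Icc a b, ∀ y ∈ Set.Icc a b, x ≤ y →
      m * (y - x) ≤ f y - f x ∧ f y - f x ≤ M * (y - x))
    (hconv : ConvexOn ℝ (Set.Icc a b) f)
    (happrox : ∀ ε : ℝ, 0 < ε → ∃ g : ℝ → ℝ, ConvexOn ℝ (Set.Icc a b) g ∧
      PiecewiseLinearWithSlopes S a b g ∧ ∀ x ∈ Set.Icc a b, |f x - g x| ≤ ε)
    {x : ℝ} (hx : x ∈ Set.Ico a b) : rder f b x ∈ S := by
  classical
  by_contra hvS
  set v := rder f b x with hv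
  have hSfne : hS.toFinset.Nonempty := by rwa [Set.Finite.toFinset_nonempty]
  have himne : (hS.toFinset.image fun s => |s - v|).Nonempty := hSfne.image _
  set ρ := (hS.toFinset.image fun s => |s - v|).min' himne with hρdef
  have hρle : ∀ s ∈ S, ρ ≤ |s - v| := fun s hs =>
    Finset.min'_le _ _ (Finset.mem_image_of_mem _ (hS.mem_toFinset.mpr hs))
  have hρpos : 0 < ρ := by
    obtain ⟨s₀, hs₀, hse⟩ := Finset.mem_image.mp (Finset.min'_mem _ himne)
    rw [hρdef, ← hse]
    have : s₀ ≠ v := fun h => hvS (h ▸ hS.mem_toFinset.mp hs₀)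
    exact abs_pos.mpr (sub_ne_zero.mpr this)
  obtain ⟨y, hy, hsly⟩ := exists_slope_lt hfb hx (by positivity : 0 < ρ/8)
  set h := y - x with hhdef
  have hh : 0 < h := by simp only [hhdef]; linarith [hy.1]
  set u := (x + y)/2 with hudef
  have hux : u - x = h/2 := by rw [hudef, hhdef]; ring
  have hyu : y - u = h/2 := by rw [hudef, hhdef]; ring
  have hxu : x < u := by linarith
  have huy : u < y := by linarith
  have hxI : x ∈ Set.Icc a b := ⟨hx.1, hx.2.le⟩
  have hyI : y ∈ Set.Icc a b := ⟨hx.1.trans (by linarith), hy.2⟩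
  have huI : u ∈ Set.Icc a b := ⟨hx.1.trans hxu.le, by linarith [hy.2]⟩
  -- slope facts for f
  have hd1 : v * (h/2) ≤ f u - f x := by
    have h1 := rder_le_slope hfb hx (⟨hxu, by linarith [hy.2]⟩ : u ∈ Set.Ioc x b)
    rw [le_div_iff₀ (by linarith : (0:ℝ) < u - x)] at h1
    rw [← hux]; exact h1
  have hsxy : v * h ≤ f y - f x := by
    have h1 := rder_le_slope hfb hx hy
    rw [le_div_iff₀ (by linarith : (0:ℝ) < y - x)] at h1
    rw [hhdef]; exact h1
  have hA : f y - f x < (v + ρ/8) * h := by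
    rw [div_lt_iff₀ (by linarith : (0:ℝ) < y - x)] at hsly
    rw [hhdef]; exact hsly
  have hd2 : v * (h/2) ≤ f y - f u := by
    have h1 : (f y - f x)/(y - x) ≤ (f y - f u)/(y - u) :=
      hconv.secant_mono_aux3 hxI hyI hxu huy
    have h2 : v ≤ (f y - f u)/(y - u) := by
      refine le_trans ?_ h1
      rw [le_div_iff₀ (by linarith : (0:ℝ) < y - x)]
      rw [← hhdef] at *; linarith
    rw [le_div_iff₀ (by linarith : (0:ℝ) < y - u)] at h2
    rw [← hyu]; exact h2
  have hd1u : f u - f x ≤ (v + ρ/4) * (h/2) := by nlinarith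
  have hd2u : f y - f u ≤ (v + ρ/4) * (h/2) := by nlinarith
  -- approximation
  set ε := ρ * h / 64 with hεdef
  have hεpos : 0 < ε := by rw [hεdef]; positivity
  obtain ⟨g, hgc, hgpl, hge⟩ := happrox ε hεpos
  have hex := abs_le.mp (hge x hxI)
  have heu := abs_le.mp (hge u huI)
  have hey := abs_le.mp (hge y hyI)
  have e1l : (v - ρ/16) * (h/2) ≤ g u - g x := by nlinarith
  have e2u : g y - g u ≤ (v + 5*ρ/16) * (h/2) := by nlinarith
  obtain ⟨s, hsS, hs1, hs2⟩ := pl_slope_between hgc hgpl hxI hyI hxu huy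
  have hs1' : v - ρ/16 ≤ s := by
    refine le_trans ?_ hs1
    rw [le_div_iff₀ (by linarith : (0:ℝ) < u - x), hux]
    exact e1l
  have hs2' : s ≤ v + 5*ρ/16 := by
    refine le_trans hs2 ?_
    rw [div_le_iff₀ (by linarith : (0:ℝ) < y - u), hyu]
    exact e2u
  have habs : |s - v| ≤ 5*ρ/16 := abs_le.mpr ⟨by linarith, by linarith⟩
  have := hρle s hsS
  linarith

/-- abs bound on differences -/
lemma diff_abs_bound {a b : ℝ} {f : ℝ → ℝ} {m M : ℝ}
    (hfb : ∀ x ∈ Set.Icc a b, ∀ y ∈ Set.Icc a b, x ≤ y →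
      m * (y - x) ≤ f y - f x ∧ f y - f x ≤ M * (y - x))
    {x y : ℝ} (hx : x ∈ Set.Icc a b) (hy : y ∈ Set.Icc a b) (hxy : x ≤ y) :
    |f y - f x| ≤ max |m| |M| * (y - x) := by
  obtain ⟨h1, h2⟩ := hfb x hx y hy hxy
  have hm : -|m| ≤ m := neg_abs_le m
  have hM : M ≤ |M| := le_abs_self M
  have hK1 : |m| ≤ max |m| |M| := le_max_left _ _
  have hK2 : |M| ≤ max |m| |M| := le_max_right _ _
  rw [abs_le]
  constructor <;> nlinarith [sub_nonneg.mpr hxy]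

/-- local constancy of rder on the right -/
lemma rder_loc_const {a b : ℝ} {S : Set ℝ} {f : ℝ → ℝ} {m M : ℝ}
    (hfb : ∀ x ∈ Set.Icc a b, ∀ y ∈ Set.Icc a b, x ≤ y →
      m * (y - x) ≤ f y - f x ∧ f y - f x ≤ M * (y - x))
    (hconv : ConvexOn ℝ (Set.Icc a b) f) (hS : S.Finite)
    (hrdS : ∀ x ∈ Set.Ico a b, rder f b x ∈ S)
    (hmM : ∀ s ∈ S, m ≤ s ∧ s ≤ M)
    {x : ℝ} (hx : x ∈ Set.Ico a b) :
    ∃ δ, 0 < δ ∧ ∀ y, x ≤ y → y < x + δ → y < b → rder f b y = rder f b x := by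
  classical
  set K := max |m| |M| with hKdef
  have hK0 : (0:ℝ) ≤ K := le_trans (abs_nonneg m) (le_max_left _ _)
  set v := rder f b x with hv
  by_cases hT : ∃ s ∈ S, v < s
  · -- there are bigger slopes in S; stay below the least of them
    set T := hS.toFinset.filter (fun s => v < s) with hTdef
    have hTne : T.Nonempty := by
      obtain ⟨s, hs, hvs⟩ := hT
      exact ⟨s, by simp [hTdef, hS.mem_toFinset.mpr hs, hvs]⟩
    set σ := T.min' hTne with hσdef
    have hmem := Finset.mem_filter.mp (T.min'_mem hTne)
    have hσS : σ ∈ S := hS.mem_toFinset.mp hmem.1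
    have hvσ : v < σ := hmem.2
    have hσle : ∀ s ∈ S, v < s → σ ≤ s := fun s hs hvs =>
      Finset.min'_le _ _ (by simp [hTdef, hS.mem_toFinset.mpr hs, hvs])
    have hσK : |σ| ≤ K := by
      obtain ⟨h1, h2⟩ := hmM σ hσS
      rw [abs_le]
      refine ⟨?_, ?_⟩
      · have := neg_abs_le m; have := le_max_left |m| |M|; linarith
      · have := le_abs_self M; have := le_max_right |m| |M|; linarith
    obtain ⟨w, hw, hslw⟩ := exists_slope_lt hfb hx (by linarith : 0 < (σ - v)/2)
    have hwx : 0 < w - x := by linarith [hw.1]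
    set δ := min ((w - x)/2) ((σ - v) * (w - x) / (16*K + 16)) with hδdef
    have hδpos : 0 < δ := by
      apply lt_min (by linarith)
      have : 0 < (σ - v) * (w - x) := mul_pos (by linarith) hwx
      positivity
    refine ⟨δ, hδpos, fun y hxy hyδ hyb => ?_⟩
    have hyI : y ∈ Set.Ico a b := ⟨hx.1.trans hxy, hyb⟩
    have hge : v ≤ rder f b y := rder_mono hfb hconv hx hyI hxy
    have hyx' : y - x < δ := sub_lt_iff_lt_add.mpr (add_comm x δ ▸ hyδ)
    have hyw2 : y - x < (w - x)/2 := lt_of_lt_of_le hyx' (min_le_left _ _)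
    have hyw : y < w := by linarith
    have hyδ2 : y - x < (σ - v) * (w - x) / (16*K + 16) :=
      lt_of_lt_of_le hyx' (min_le_right _ _)
    have hyδ3 : (16*K + 16) * (y - x) < (σ - v) * (w - x) := by
      have := (lt_div_iff₀ (by linarith : (0:ℝ) < 16*K+16)).mp hyδ2
      linarith
    -- bound rder y by slope over [y, w]
    have hlt : rder f b y < σ := by
      have h1 : rder f b y ≤ (f w - f y) / (w - y) :=
        rder_le_slope hfb hyI ⟨hyw, hw.2⟩
      have h2 : f w - f x < (v + (σ - v)/2) * (w - x) := by
        rw [div_lt_iff₀ hwx] at hslw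
        exact hslw
      have hxI : x ∈ Set.Icc a b := ⟨hx.1, hx.2.le⟩
      have hyI' : y ∈ Set.Icc a b := ⟨hyI.1, hyI.2.le⟩
      have h3 : |f y - f x| ≤ K * (y - x) := diff_abs_bound hfb hxI hyI' hxy
      have h4 : f w - f y < σ * (w - y) := by
        have h5 : f y - f x ≥ -(K * (y - x)) := neg_le_of_abs_le h3
        have hK' : -K ≤ σ ∧ σ ≤ K := abs_le.mp hσK
        clear hyδ2 hslw h1 h3
        nlinarith [sub_nonneg.mpr hxy, hK'.1, hK'.2]
      calc rder f b y ≤ (f w - f y) / (w - y) := h1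
        _ < σ := by rw [div_lt_iff₀ (by linarith : (0:ℝ) < w - y)]; exact h4
    have hyS : rder f b y ∈ S := hrdS y hyI
    rcases eq_or_lt_of_le hge with h | h
    · exact h.symm
    · exact absurd (hσle _ hyS h) (not_le.mpr hlt)
  · -- no bigger slopes: rder is maximal already
    push_neg at hT
    refine ⟨1, one_pos, fun y hxy _ hyb => ?_⟩
    have hyI : y ∈ Set.Ico a b := ⟨hx.1.trans hxy, hyb⟩
    have hge : v ≤ rder f b y := rder_mono hfb hconv hx hyI hxy
    exact le_antisymm (hT _ (hrdS y hyI)) hge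

/-- two-point affine lemma -/
lemma affine_pair {a b : ℝ} {f : ℝ → ℝ} {m M : ℝ}
    (hfb : ∀ x ∈ Set.Icc a b, ∀ y ∈ Set.Icc a b, x ≤ y →
      m * (y - x) ≤ f y - f x ∧ f y - f x ≤ M * (y - x))
    (hconv : ConvexOn ℝ (Set.Icc a b) f)
    {x y : ℝ} (hx : x ∈ Set.Ico a b) (hy : y ∈ Set.Ico a b) (hxy : x ≤ y)
    (heq : rder f b y = rder f b x) {z : ℝ} (hz : z ∈ Set.Ioc x y) :
    f z - f x = rder f b x * (z - x) := by
  have hzx : 0 < z - x := by linarith [hz.1]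
  have h1 : rder f b x * (z - x) ≤ f z - f x := by
    have := rder_le_slope hfb hx (⟨hz.1, hz.2.trans hy.2.le⟩ : z ∈ Set.Ioc x b)
    rw [le_div_iff₀ hzx] at this
    linarith
  have h2 : (f z - f x) / (z - x) ≤ rder f b y := by
    have hne : ((fun w => (f w - f y) / (w - y)) '' Set.Ioc y b).Nonempty :=
      ⟨_, ⟨b, ⟨hy.2, le_refl b⟩, rfl⟩⟩
    rw [rder]
    apply le_csInf hne
    rintro r ⟨w, hw, rfl⟩
    have hxI : x ∈ Set.Icc a b := ⟨hx.1, hx.2.le⟩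
    have hzI : z ∈ Set.Icc a b := ⟨hx.1.trans hz.1.le, hz.2.trans hy.2.le⟩
    have hwI : w ∈ Set.Icc a b := ⟨hy.1.trans hw.1.le, hw.2⟩
    have hzw : z < w := lt_of_le_of_lt hz.2 hw.1
    have hA : (f z - f x) / (z - x) ≤ (f w - f z) / (w - z) :=
      hconv.slope_mono_adjacent hxI hwI hz.1 hzw
    rcases eq_or_lt_of_le hz.2 with rfl | hzy
    · exact hA
    · have hB : (f w - f z) / (w - z) ≤ (f w - f y) / (w - y) :=
        hconv.secant_mono_aux3 hzI hwI hzy hw.1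
      exact hA.trans hB
  rw [heq, div_le_iff₀ hzx] at h2
  linarith

/-- extend the affine formula to the right endpoint by continuity -/
lemma affine_closure {f : ℝ → ℝ} {K s c p q : ℝ} (hpq : p < q) (hK0 : 0 ≤ K)
    (hK : ∀ y, p ≤ y → y < q → |f q - f y| ≤ K * (q - y))
    (haff : ∀ z, p ≤ z → z < q → f z = c + s * z) : f q = c + s * q := by
  have key : ∀ η : ℝ, 0 < η → |f q - (c + s * q)| ≤ η := by
    intro η hη
    set h' := min (η / (K + |s| + 1)) ((q - p)/2) with hh'
    have hs0 : (0:ℝ) ≤ |s| := abs_nonneg s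
    have hh'pos : 0 < h' := by
      apply lt_min
      · positivity
      · linarith
    set y := q - h' with hy
    have hpy : p ≤ y := by
      have : h' ≤ (q - p)/2 := min_le_right _ _
      rw [hy]; linarith
    have hyq : y < q := by rw [hy]; linarith
    have h1 : |f q - f y| ≤ K * h' := by
      have := hK y hpy hyq
      rw [hy] at this ⊢
      convert this using 2
      ring
    have h2 : f y = c + s * y := haff y hpy hyq
    have h3 : |f q - (c + s * q)| ≤ |f q - f y| + |s| * h' := by
      have : f q - (c + s * q) = (f q - f y) + s * (y - q) := by rw [h2]; ring
      rw [this]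
      refine le_trans (abs_add_le _ _) ?_
      have : |s * (y - q)| = |s| * h' := by
        rw [abs_mul, hy]
        congr 1
        rw [abs_of_nonpos (by linarith)]
        ring
      rw [this]
    have h4 : h' ≤ η / (K + |s| + 1) := min_le_left _ _
    have h5 : (K + |s|) * h' ≤ η := by
      have h6 : (K + |s|) * h' ≤ (K + |s|) * (η / (K + |s| + 1)) := by
        apply mul_le_mul_of_nonneg_left h4 (by linarith)
      have h7 : (K + |s|) * (η / (K + |s| + 1)) ≤ η := by
        have hD : (0:ℝ) < K + |s| + 1 := by linarith
        have h8 : (K + |s|) * (η / (K + |s| + 1)) ≤ (K + |s| + 1) * (η / (K + |s| + 1)) :=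
          mul_le_mul_of_nonneg_right (by linarith) (by positivity)
        have h9 : (K + |s| + 1) * (η / (K + |s| + 1)) = η := by field_simp
        linarith
      linarith
    calc |f q - (c + s * q)| ≤ |f q - f y| + |s| * h' := h3
      _ ≤ K * h' + |s| * h' := by linarith
      _ = (K + |s|) * h' := by ring
      _ ≤ η := h5
  have : |f q - (c + s * q)| ≤ 0 := by
    by_contra hcon
    push_neg at hcon
    have := key (|f q - (c + s * q)|/2) (by linarith)
    linarith
  have := abs_nonneg (f q - (c + s * q))
  have : |f q - (c + s * q)| = 0 := le_antisymm ‹|f q - (c + s * q)| ≤ 0› this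
  have := abs_eq_zero.mp this
  linarith

def levelSet (f : ℝ → ℝ) (a b v : ℝ) : Set ℝ := {x | x ∈ Set.Ico a b ∧ rder f b x = v}

/-- properties of the supremum of a level set of rder -/
lemma level_sup {a b : ℝ} {S : Set ℝ} {f : ℝ → ℝ} {m M : ℝ}
    (hfb : ∀ x ∈ Set.Icc a b, ∀ y ∈ Set.Icc a b, x ≤ y →
      m * (y - x) ≤ f y - f x ∧ f y - f x ≤ M * (y - x))
    (hconv : ConvexOn ℝ (Set.Icc a b) f) (hS : S.Finite)
    (hrdS : ∀ x ∈ Set.Ico a b, rder f b x ∈ S)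
    (hmM : ∀ s ∈ S, m ≤ s ∧ s ≤ M)
    {x₀ : ℝ} (hx₀ : x₀ ∈ Set.Ico a b) :
    x₀ < sSup (levelSet f a b (rder f b x₀)) ∧
    sSup (levelSet f a b (rder f b x₀)) ≤ b ∧
    (∀ z, x₀ ≤ z → z < sSup (levelSet f a b (rder f b x₀)) →
        z ∈ Set.Ico a b ∧ rder f b z = rder f b x₀) ∧
    (sSup (levelSet f a b (rder f b x₀)) < b →
        sSup (levelSet f a b (rder f b x₀)) ∈ Set.Ico a b ∧
        rder f b x₀ < rder f b (sSup (levelSet f a b (rder f b x₀)))) := by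
  set v := rder f b x₀ with hv
  set A := levelSet f a b v with hA
  set c := sSup A with hc
  have hAsub : A ⊆ Set.Ico a b := fun z hz => hz.1
  have hAx₀ : x₀ ∈ A := ⟨hx₀, rfl⟩
  have hAne : A.Nonempty := ⟨x₀, hAx₀⟩
  have hAbdd : BddAbove A := ⟨b, fun z hz => (hAsub hz).2.le⟩
  have hcb : c ≤ b := csSup_le hAne (fun z hz => (hAsub hz).2.le)
  -- x₀ < c via local constancy
  have hx₀c : x₀ < c := by
    obtain ⟨δ, hδ, hδc⟩ := rder_loc_const hfb hconv hS hrdS hmM hx₀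
    set y := min (x₀ + δ/2) ((x₀ + b)/2) with hy
    have hyx : x₀ < y := by
      apply lt_min (by linarith)
      have := hx₀.2; linarith
    have hyδ : y < x₀ + δ := lt_of_le_of_lt (min_le_left _ _) (by linarith)
    have hyb : y < b := by
      have h1 : y ≤ (x₀ + b)/2 := min_le_right _ _
      have := hx₀.2; linarith
    have hyA : y ∈ A := ⟨⟨hx₀.1.trans hyx.le, hyb⟩, hδc y hyx.le hyδ hyb⟩
    exact lt_of_lt_of_le hyx (le_csSup hAbdd hyA)
  -- middle: all points in [x₀, c) are in the level set
  have hmid : ∀ z, x₀ ≤ z → z < c → z ∈ Set.Ico a b ∧ rder f b z = v := by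
    intro z hz1 hz2
    obtain ⟨q, hqA, hzq⟩ := exists_lt_of_lt_csSup hAne hz2
    have hzI : z ∈ Set.Ico a b := ⟨hx₀.1.trans hz1, hzq.trans (hqA.1.2)⟩
    have h1 : rder f b z ≤ rder f b q := rder_mono hfb hconv hzI hqA.1 hzq.le
    have h2 : v ≤ rder f b z := rder_mono hfb hconv hx₀ hzI hz1
    rw [hqA.2] at h1
    exact ⟨hzI, le_antisymm h1 h2⟩
  refine ⟨hx₀c, hcb, hmid, fun hcltb => ?_⟩
  have hcI : c ∈ Set.Ico a b := ⟨hx₀.1.trans hx₀c.le, hcltb⟩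
  have hvc : v ≤ rder f b c := rder_mono hfb hconv hx₀ hcI hx₀c.le
  refine ⟨hcI, ?_⟩
  rcases eq_or_lt_of_le hvc with heq | hlt
  · exfalso
    obtain ⟨δ, hδ, hδc⟩ := rder_loc_const hfb hconv hS hrdS hmM hcI
    set y := min (c + δ/2) ((c + b)/2) with hy
    have hyx : c < y := by
      apply lt_min (by linarith)
      have := hcI.2; linarith
    have hyδ : y < c + δ := lt_of_le_of_lt (min_le_left _ _) (by linarith)
    have hyb : y < b := by
      have h1 : y ≤ (c + b)/2 := min_le_right _ _
      have := hcI.2; linarith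
    have hyA : y ∈ A := by
      refine ⟨⟨hcI.1.trans hyx.le, hyb⟩, ?_⟩
      rw [hδc y hyx.le hyδ hyb, ← heq]
    exact absurd (le_csSup hAbdd hyA) (not_le.mpr hyx)
  · exact hlt

noncomputable def bps (f : ℝ → ℝ) (a b : ℝ) : ℕ → ℝ
  | 0 => a
  | j + 1 => if bps f a b j = b then b
      else sSup (levelSet f a b (rder f b (bps f a b j)))

/-- If a convex function f on [a,b] is uniformly approximable, to every precision,
by convex piecewise-linear functions with slopes in a fixed finite set S, then f is
itself piecewise linear with slopes in S. -/
theorem convex_approx_piecewise_linear (a b : ℝ) (hab : a < b) (S : Set ℝ)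
    (hS : S.Finite) (f : ℝ → ℝ) (hconv : ConvexOn ℝ (Set.Icc a b) f)
    (happrox : ∀ ε : ℝ, 0 < ε → ∃ g : ℝ → ℝ, ConvexOn ℝ (Set.Icc a b) g ∧
      PiecewiseLinearWithSlopes S a b g ∧ ∀ x ∈ Set.Icc a b, |f x - g x| ≤ ε) :
    PiecewiseLinearWithSlopes S a b f := by
  classical
  -- S is nonempty
  have hSne : S.Nonempty := by
    obtain ⟨g, _, ⟨N, hN0, t, _, _, _, hp⟩, _⟩ := happrox 1 one_pos
    obtain ⟨c, s, hsS, _⟩ := hp 0 hN0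
    exact ⟨s, hsS⟩
  have hSfne : hS.toFinset.Nonempty := by rwa [Set.Finite.toFinset_nonempty]
  set m := hS.toFinset.min' hSfne with hm
  set M := hS.toFinset.max' hSfne with hM
  have hmM : ∀ s ∈ S, m ≤ s ∧ s ≤ M := fun s hs =>
    ⟨Finset.min'_le _ _ (hS.mem_toFinset.mpr hs), Finset.le_max' _ _ (hS.mem_toFinset.mpr hs)⟩
  -- slope bounds for f
  have hfb : ∀ x ∈ Set.Icc a b, ∀ y ∈ Set.Icc a b, x ≤ y →
      m * (y - x) ≤ f y - f x ∧ f y - f x ≤ M * (y - x) := by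
    intro x hx y hy hxy
    constructor
    · apply le_of_forall_pos_le_add
      intro ε hε
      obtain ⟨g, _, hgpl, hge⟩ := happrox (ε/2) (by linarith)
      have hb := (pl_diff_bounds hgpl (fun s hs => (hmM s hs).1)
        (fun s hs => (hmM s hs).2) x hx y hy hxy).1
      have h1 := abs_le.mp (hge x hx)
      have h2 := abs_le.mp (hge y hy)
      linarith
    · apply le_of_forall_pos_le_add
      intro ε hε
      obtain ⟨g, _, hgpl, hge⟩ := happrox (ε/2) (by linarith)
      have hb := (pl_diff_bounds hgpl (fun s hs => (hmM s hs).1)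
        (fun s hs => (hmM s hs).2) x hx y hy hxy).2
      have h1 := abs_le.mp (hge x hx)
      have h2 := abs_le.mp (hge y hy)
      linarith
  have hrdS : ∀ x ∈ Set.Ico a b, rder f b x ∈ S := fun x hx =>
    rder_mem_S hS hSne hfb hconv happrox hx
  have hK0 : (0:ℝ) ≤ max |m| |M| := le_trans (abs_nonneg m) (le_max_left _ _)
  have hbps0 : bps f a b 0 = a := rfl
  -- basic invariants of the recursion
  have hstep : ∀ j, bps f a b j ≠ b → bps f a b j ∈ Set.Ico a b := by
    intro j
    induction j with
    | zero => intro _; rw [hbps0]; exact ⟨le_refl a, hab⟩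
    | succ k ih =>
      intro hne
      have hkne : bps f a b k ≠ b := by
        intro h; apply hne; simp [bps, h]
      have hkI := ih hkne
      have hL := level_sup hfb hconv hS hrdS hmM hkI
      have heq : bps f a b (k+1) = sSup (levelSet f a b (rder f b (bps f a b k))) := by
        simp [bps, hkne]
      rw [heq]
      refine ⟨hkI.1.trans hL.1.le, lt_of_le_of_ne hL.2.1 ?_⟩
      rw [← heq]; exact hne
  have hstep2 : ∀ j, bps f a b j ≠ b → bps f a b j < bps f a b (j+1) := by
    intro j hne
    have hL := level_sup hfb hconv hS hrdS hmM (hstep j hne)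
    have heq : bps f a b (j+1) = sSup (levelSet f a b (rder f b (bps f a b j))) := by
      simp [bps, hne]
    rw [heq]; exact hL.1
  have hstep3 : ∀ j, bps f a b j ≠ b → bps f a b (j+1) ≠ b →
      rder f b (bps f a b j) < rder f b (bps f a b (j+1)) := by
    intro j hne hne'
    have hL := level_sup hfb hconv hS hrdS hmM (hstep j hne)
    have heq : bps f a b (j+1) = sSup (levelSet f a b (rder f b (bps f a b j))) := by
      simp [bps, hne]
    have hlt : sSup (levelSet f a b (rder f b (bps f a b j))) < b := by
      rw [← heq]; exact lt_of_le_of_ne (heq ▸ hL.2.1) hne'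
    have := (hL.2.2.2 hlt).2
    rw [heq]; exact this
  -- the recursion reaches b within card S steps
  have hcount : ∀ j, bps f a b j ≠ b →
      j < (hS.toFinset.filter (fun s => s ≤ rder f b (bps f a b j))).card := by
    intro j
    induction j with
    | zero =>
      intro _
      apply Finset.card_pos.mpr
      refine ⟨rder f b (bps f a b 0), Finset.mem_filter.mpr ⟨?_, le_refl _⟩⟩
      rw [hbps0]
      exact hS.mem_toFinset.mpr (hrdS a ⟨le_refl a, hab⟩)
    | succ k ih =>
      intro hne
      have hkne : bps f a b k ≠ b := by
        intro h; apply hne; simp [bps, h]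
      have hk := ih hkne
      have hlt := hstep3 k hkne hne
      have hsub : hS.toFinset.filter (fun s => s ≤ rder f b (bps f a b k)) ⊆
          hS.toFinset.filter (fun s => s ≤ rder f b (bps f a b (k+1))) := by
        intro s hs
        rw [Finset.mem_filter] at hs ⊢
        exact ⟨hs.1, hs.2.trans hlt.le⟩
      have hmem : rder f b (bps f a b (k+1)) ∈
          hS.toFinset.filter (fun s => s ≤ rder f b (bps f a b (k+1))) := by
        refine Finset.mem_filter.mpr ⟨?_, le_refl _⟩
        exact hS.mem_toFinset.mpr (hrdS _ (hstep (k+1) hne))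
      have hnmem : rder f b (bps f a b (k+1)) ∉
          hS.toFinset.filter (fun s => s ≤ rder f b (bps f a b k)) := by
        intro hcon
        rw [Finset.mem_filter] at hcon
        exact absurd hcon.2 (not_le.mpr hlt)
      have hss : hS.toFinset.filter (fun s => s ≤ rder f b (bps f a b k)) ⊂
          hS.toFinset.filter (fun s => s ≤ rder f b (bps f a b (k+1))) :=
        ⟨hsub, fun hcon => hnmem (hcon hmem)⟩
      have := Finset.card_lt_card hss
      omega
  have hex : ∃ n, bps f a b n = b := by
    refine ⟨hS.toFinset.card, ?_⟩
    by_contra h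
    have h1 := hcount _ h
    have h2 := Finset.card_filter_le hS.toFinset (fun s => s ≤ rder f b (bps f a b hS.toFinset.card))
    omega
  set N := Nat.find hex with hN
  have hNb : bps f a b N = b := Nat.find_spec hex
  have hN0 : 0 < N := by
    rcases Nat.eq_zero_or_pos N with h | h
    · exfalso; rw [h, hbps0] at hNb; exact absurd hNb (ne_of_lt hab)
    · exact h
  have hlt : ∀ i, i < N → bps f a b i ≠ b := fun i hi => Nat.find_min hex hi
  refine ⟨N, hN0, bps f a b, hbps0, hNb, fun i hi => hstep2 i (hlt i hi), ?_⟩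
  intro i hi
  have hpI : bps f a b i ∈ Set.Ico a b := hstep i (hlt i hi)
  set p := bps f a b i with hp
  set s := rder f b p with hsdef
  refine ⟨f p - s * p, s, hrdS p hpI, ?_⟩
  have hq : bps f a b (i+1) = sSup (levelSet f a b s) := by
    simp [bps, hlt i hi, hp, hsdef]
  have hL := level_sup hfb hconv hS hrdS hmM hpI
  rw [← hsdef, ← hq] at hL
  set q := bps f a b (i+1) with hqd
  have hpq : p < q := hL.1
  have hqb : q ≤ b := hL.2.1
  -- affine formula on [p, q)
  have haff : ∀ z, p ≤ z → z < q → f z = (f p - s * p) + s * z := by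
    intro z hz1 hz2
    rcases eq_or_lt_of_le hz1 with rfl | hz
    · ring
    · have hzm := hL.2.2.1 z hz1 hz2
      have h1 : f z - f p = rder f b p * (z - p) :=
        affine_pair hfb hconv hpI hzm.1 hz1 (by rw [hzm.2]) ⟨hz, le_refl z⟩
      rw [← hsdef] at h1
      linear_combination h1
  -- extend to q
  have hfq : f q = (f p - s * p) + s * q := by
    refine affine_closure hpq hK0 (fun y hy1 hy2 => ?_) haff
    have hyI : y ∈ Set.Icc a b := ⟨hpI.1.trans hy1, (hy2.trans_le hqb).le⟩
    have hqI : q ∈ Set.Icc a b := ⟨hpI.1.trans hpq.le, hqb⟩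
    exact diff_abs_bound hfb hyI hqI hy2.le
  intro x hx
  rcases eq_or_lt_of_le hx.2 with rfl | hxq
  · exact hfq
  · exact haff x hx.1 hxq
end

section
/- Let A : ℝ/ℤ → SL(2,ℂ) be analytic with a bounded holomorphic extension to |Im z| < δ. Then the function ε ↦ L(α, A_ε), defined for |ε| < δ where A_ε(x) = A(x + iε), is convex in ε. -/
open Filter MeasureTheory Set

/-- Frobenius-type norm of a 2×2 complex matrix. -/
noncomputable def mnorm (B : Matrix (Fin 2) (Fin 2) ℂ) : ℝ :=
  Real.sqrt (∑ i : Fin 2, ∑ j : Fin 2, ‖B i j‖ ^ 2)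

/-- Euclidean norm of a vector in ℂ². -/
noncomputable def vnorm (w : Fin 2 → ℂ) : ℝ :=
  Real.sqrt (∑ i : Fin 2, ‖w i‖ ^ 2)

/-- The n-step cocycle product A(x+(n-1)α)⋯A(x+α)A(x). -/
noncomputable def cocycle (A : ℝ → Matrix (Fin 2) (Fin 2) ℂ) (α : ℝ) (n : ℕ) (x : ℝ) :
    Matrix (Fin 2) (Fin 2) ℂ :=
  (((List.range n).reverse).map (fun k => A (x + k * α))).prod

/-- The Lyapunov exponent L(α,A) = lim (1/n) ∫ log‖A_n(x)‖ dx. -/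
noncomputable def lyap (α : ℝ) (A : ℝ → Matrix (Fin 2) (Fin 2) ℂ) : ℝ :=
  Filter.limsup
    (fun n : ℕ => (n : ℝ)⁻¹ * ∫ x in (0:ℝ)..1, Real.log (mnorm (cocycle A α n x)))
    Filter.atTop

/-!
Write `A_n(z)` for the cocycle product continued holomorphically into the strip, and view it
as a vector `f` in `ℂ⁴`. For holomorphic nonvanishing `f`, `u = log ‖f‖²` is subharmonic:
`Δu = 4 (‖f‖² ‖f'‖² - |⟪f, f'⟫|²) / ‖f‖⁴ ≥ 0` by Cauchy–Schwarz. By periodicity the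
`∂ₓ²u` part of `Δu` integrates to zero over a period, so the second derivative of
`ε ↦ ∫₀¹ u(x + iε) dx` is `∫₀¹ Δu ≥ 0`, and each `(1/n) ∫ log ‖A_n‖` is convex in `ε`.
Since `det A = 1` and `A` is bounded, these functions lie in a fixed interval `[0, c]`
(`n ≥ 1`), and a limsup of convex functions bounded in this way is convex.
-/

open Complex
open scoped InnerProductSpace Topology

theorem limsup_const_mul_of_nonneg {ι : Type*} {l : Filter ι} [l.NeBot] {u : ι → ℝ} {c : ℝ}
    (hc : 0 ≤ c) (hle : IsBoundedUnder (· ≤ ·) l u) (hge : IsBoundedUnder (· ≥ ·) l u) :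
    limsup (fun i => c * u i) l = c * limsup u l :=
  ((monotone_mul_left_of_nonneg hc).map_limsup_of_continuousAt u (by fun_prop) hle
    hge.isCoboundedUnder_le).symm

theorem ConvexOn.limsup {ι E : Type*} [AddCommMonoid E] [Module ℝ E] {l : Filter ι} [l.NeBot]
    {s : Set E} {f : ι → E → ℝ} (hf : ∀ᶠ i in l, ConvexOn ℝ s (f i))
    (hle : ∀ x ∈ s, IsBoundedUnder (· ≤ ·) l (fun i => f i x))
    (hge : ∀ x ∈ s, IsBoundedUnder (· ≥ ·) l (fun i => f i x)) :
    ConvexOn ℝ s (fun x => limsup (fun i => f i x) l) := by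
  obtain ⟨-, hs, -⟩ := hf.exists
  refine ⟨hs, fun x hx y hy a b ha hb hab => ?_⟩
  have hmul : ∀ {c : ℝ} {z : E}, 0 ≤ c → z ∈ s →
      IsBoundedUnder (· ≤ ·) l (fun i => c * f i z) ∧
        IsBoundedUnder (· ≥ ·) l (fun i => c * f i z) :=
    fun hc hz => ⟨(hle _ hz).comp fun _ _ h => mul_le_mul_of_nonneg_left h hc,
      (hge _ hz).comp fun _ _ h => mul_le_mul_of_nonneg_left h hc⟩
  calc Filter.limsup (fun i => f i (a • x + b • y)) l
      ≤ Filter.limsup (fun i => a * f i x + b * f i y) l :=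
        limsup_le_limsup (hf.mono fun i hi => hi.2 hx hy ha hb hab)
          (hge _ (hs hx hy ha hb hab)).isCoboundedUnder_le
          (isBoundedUnder_le_add (hmul ha hx).1 (hmul hb hy).1)
    _ ≤ Filter.limsup (fun i => a * f i x) l + Filter.limsup (fun i => b * f i y) l :=
        limsup_add_le (hmul ha hx).2 (hmul ha hx).1 (hmul hb hy).2.isCoboundedUnder_le
          (hmul hb hy).1
    _ = a • Filter.limsup (fun i => f i x) l + b • Filter.limsup (fun i => f i y) l := by
        rw [limsup_const_mul_of_nonneg ha (hle x hx) (hge x hx),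
          limsup_const_mul_of_nonneg hb (hle y hy) (hge y hy), smul_eq_mul, smul_eq_mul]

theorem HasLineDerivAt.hasDerivAt_shift {E : Type*} [NormedAddCommGroup E] [NormedSpace ℝ E]
    {F : Type*} [NormedAddCommGroup F] [NormedSpace ℝ F] {g : E → F} {g' : F} {z v : E} {t₀ : ℝ}
    (h : HasLineDerivAt ℝ g g' (z + t₀ • v) v) :
    HasDerivAt (fun t : ℝ => g (z + t • v)) g' t₀ := by
  have h' : HasDerivAt (fun t : ℝ => g (z + t₀ • v + t • v)) g' (t₀ - t₀) := by
    rw [sub_self]; exact h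
  convert h'.comp_sub_const t₀ t₀ using 2 with t
  rw [add_assoc, ← add_smul, add_sub_cancel]

def horizontalStrip (δ : ℝ) : Set ℂ := {z : ℂ | |z.im| < δ}

theorem isOpen_horizontalStrip (δ : ℝ) : IsOpen (horizontalStrip δ) :=
  isOpen_lt (continuous_abs.comp continuous_im) continuous_const

theorem ofReal_add_mul_I_mem_horizontalStrip {δ ε : ℝ} (hε : ε ∈ Ioo (-δ) δ) (x : ℝ) :
    (x + ε * I : ℂ) ∈ horizontalStrip δ := by
  simpa [horizontalStrip, abs_lt] using hε

theorem add_ofReal_mem_horizontalStrip {δ : ℝ} {z : ℂ} (hz : z ∈ horizontalStrip δ) (x : ℝ) :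
    z + x ∈ horizontalStrip δ := by
  simpa [horizontalStrip] using hz

theorem ContinuousOn.continuous_horizontal {F : ℂ → ℝ} {δ ε : ℝ}
    (hF : ContinuousOn F (horizontalStrip δ)) (hε : ε ∈ Ioo (-δ) δ) :
    Continuous (fun x : ℝ => F (x + ε * I)) :=
  hF.comp_continuous (by fun_prop) (ofReal_add_mul_I_mem_horizontalStrip hε)

theorem hasDerivAt_integral_horizontal {F F' : ℂ → ℝ} {δ ε₀ : ℝ}
    (hF : ContinuousOn F (horizontalStrip δ)) (hF' : ContinuousOn F' (horizontalStrip δ))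
    (hderiv : ∀ z ∈ horizontalStrip δ, HasLineDerivAt ℝ F (F' z) z I) (hε₀ : ε₀ ∈ Ioo (-δ) δ) :
    HasDerivAt (fun ε : ℝ => ∫ x in (0:ℝ)..1, F (x + ε * I))
      (∫ x in (0:ℝ)..1, F' (x + ε₀ * I)) ε₀ := by
  obtain ⟨a, b, -, hab, hsub⟩ :=
    exists_Icc_mem_subset_of_mem_nhds (isOpen_Ioo.mem_nhds hε₀)
  have hK : IsCompact ((fun p : ℝ × ℝ => (p.1 + p.2 * I : ℂ)) '' (Icc 0 1 ×ˢ Icc a b)) :=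
    (isCompact_Icc.prod isCompact_Icc).image (by fun_prop)
  obtain ⟨M, hM⟩ := hK.exists_bound_of_continuousOn <| hF'.mono <| by
    rintro _ ⟨p, hp, rfl⟩
    exact ofReal_add_mul_I_mem_horizontalStrip (hsub hp.2) p.1
  refine (intervalIntegral.hasDerivAt_integral_of_dominated_loc_of_deriv_le (bound := fun _ => M)
    (F := fun (ε x : ℝ) => F (x + ε * I)) (F' := fun (ε x : ℝ) => F' (x + ε * I)) hab ?_
    ((hF.continuous_horizontal hε₀).intervalIntegrable 0 1)
    (hF'.continuous_horizontal hε₀).aestronglyMeasurable ?_ intervalIntegrable_const ?_).2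
  · filter_upwards [hab] with ε hε
    exact (hF.continuous_horizontal (hsub hε)).aestronglyMeasurable
  · refine ae_of_all _ fun x hx ε hε => hM _ ⟨(x, ε), ⟨?_, hε⟩, rfl⟩
    rw [uIoc_of_le zero_le_one] at hx
    exact Ioc_subset_Icc_self hx
  · refine ae_of_all _ fun x _ ε hε => ?_
    have := (hderiv _ (ofReal_add_mul_I_mem_horizontalStrip (hsub hε) x)).hasDerivAt_shift
    simpa only [Complex.real_smul] using this

theorem integral_horizontal_eq_zero_of_periodic {G G' : ℂ → ℝ} {δ ε : ℝ}
    (hG' : ContinuousOn G' (horizontalStrip δ))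
    (hderiv : ∀ z ∈ horizontalStrip δ, HasLineDerivAt ℝ G (G' z) z 1)
    (hper : ∀ z, G (z + 1) = G z) (hε : ε ∈ Ioo (-δ) δ) :
    ∫ x in (0:ℝ)..1, G' (x + ε * I) = 0 := by
  have hG : ∀ x : ℝ, HasDerivAt (fun t : ℝ => G (ε * I + t • (1 : ℂ))) (G' (x + ε * I)) x :=
    fun x => HasLineDerivAt.hasDerivAt_shift <| by
      simpa [add_comm] using hderiv _ (ofReal_add_mul_I_mem_horizontalStrip hε x)
  rw [intervalIntegral.integral_eq_sub_of_hasDerivAt (fun x _ => hG x)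
    ((hG'.continuous_horizontal hε).intervalIntegrable 0 1)]
  simp [hper]

theorem convexOn_integral_horizontal_of_laplacian_nonneg {δ : ℝ} {u ue uee ux uxx : ℂ → ℝ}
    (hu : ContinuousOn u (horizontalStrip δ)) (hue : ContinuousOn ue (horizontalStrip δ))
    (huee : ContinuousOn uee (horizontalStrip δ)) (huxx : ContinuousOn uxx (horizontalStrip δ))
    (hu_I : ∀ z ∈ horizontalStrip δ, HasLineDerivAt ℝ u (ue z) z I)
    (hue_I : ∀ z ∈ horizontalStrip δ, HasLineDerivAt ℝ ue (uee z) z I)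
    (hux_1 : ∀ z ∈ horizontalStrip δ, HasLineDerivAt ℝ ux (uxx z) z 1)
    (hux_per : ∀ z, ux (z + 1) = ux z)
    (hlap : ∀ z ∈ horizontalStrip δ, 0 ≤ uxx z + uee z) :
    ConvexOn ℝ (Ioo (-δ) δ) (fun ε : ℝ => ∫ x in (0:ℝ)..1, u (x + ε * I)) := by
  have hD := fun ε (hε : ε ∈ Ioo (-δ) δ) => hasDerivAt_integral_horizontal hu hue hu_I hε
  have hD2 := fun ε (hε : ε ∈ Ioo (-δ) δ) => hasDerivAt_integral_horizontal hue huee hue_I hε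
  refine convexOn_of_hasDerivWithinAt2_nonneg (f' := fun ε => ∫ x in (0:ℝ)..1, ue (x + ε * I))
    (f'' := fun ε => ∫ x in (0:ℝ)..1, uee (x + ε * I)) (convex_Ioo _ _)
    (fun ε hε => (hD ε hε).continuousAt.continuousWithinAt) ?_ ?_ ?_ <;> rw [interior_Ioo]
  · exact fun ε hε => (hD ε hε).hasDerivWithinAt
  · exact fun ε hε => (hD2 ε hε).hasDerivWithinAt
  · intro ε hε
    have hint : ∀ g : ℂ → ℝ, ContinuousOn g (horizontalStrip δ) →
        IntervalIntegrable (fun x : ℝ => g (x + ε * I)) volume 0 1 :=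
      fun g hg => (hg.continuous_horizontal hε).intervalIntegrable 0 1
    calc (0 : ℝ) ≤ ∫ x in (0:ℝ)..1, uxx (x + ε * I) + uee (x + ε * I) :=
          intervalIntegral.integral_nonneg zero_le_one fun x _ =>
            hlap _ (ofReal_add_mul_I_mem_horizontalStrip hε x)
      _ = ∫ x in (0:ℝ)..1, uee (x + ε * I) := by
          rw [intervalIntegral.integral_add (hint _ huxx) (hint _ huee),
            integral_horizontal_eq_zero_of_periodic huxx hux_1 hux_per hε, zero_add]

section LogNormSq

variable {E : Type*} [NormedAddCommGroup E] [InnerProductSpace ℂ E]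

theorem HasDerivAt.norm_sq_complex {γ : ℝ → E} {γ' : E} {t : ℝ} (h : HasDerivAt γ γ' t) :
    HasDerivAt (fun s => ‖γ s‖ ^ 2) (2 * re ⟪γ t, γ'⟫_ℂ) t := by
  -- the real inner product of this structure is `re ⟪·, ·⟫_ℂ` definitionally
  let := InnerProductSpace.rclikeToReal ℂ E
  exact h.norm_sq

theorem HasDerivAt.log_norm_sq {γ : ℝ → E} {γ' : E} {t : ℝ} (h : HasDerivAt γ γ' t)
    (h0 : γ t ≠ 0) :
    HasDerivAt (fun s => Real.log (‖γ s‖ ^ 2)) (2 * re ⟪γ t, γ'⟫_ℂ / ‖γ t‖ ^ 2) t :=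
  h.norm_sq_complex.log (by positivity)

theorem HasDerivAt.re_inner_div_norm_sq {γ γ₁ : ℝ → E} {γ₂ : E} {t : ℝ}
    (h : HasDerivAt γ (γ₁ t) t) (h₁ : HasDerivAt γ₁ γ₂ t) (h0 : γ t ≠ 0) :
    HasDerivAt (fun s => 2 * re ⟪γ s, γ₁ s⟫_ℂ / ‖γ s‖ ^ 2)
      (2 * (re ⟪γ t, γ₂⟫_ℂ + ‖γ₁ t‖ ^ 2) / ‖γ t‖ ^ 2
        - (2 * re ⟪γ t, γ₁ t⟫_ℂ / ‖γ t‖ ^ 2) ^ 2) t := by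
  have hnum : HasDerivAt (fun s => 2 * re ⟪γ s, γ₁ s⟫_ℂ)
      (2 * (re ⟪γ t, γ₂⟫_ℂ + ‖γ₁ t‖ ^ 2)) t := by
    have := (reCLM.hasFDerivAt.comp_hasDerivAt t (h.inner ℂ h₁)).const_mul 2
    simpa [inner_self_eq_norm_sq_to_K, ← ofReal_pow] using this
  have : ‖γ t‖ ≠ 0 := norm_ne_zero_iff.mpr h0
  refine (hnum.fun_div h.norm_sq_complex (by positivity)).congr_deriv ?_
  field_simp

theorem re_inner_sq_add_re_inner_I_smul_sq_le (a b : E) :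
    re ⟪a, b⟫_ℂ ^ 2 + re ⟪a, I • b⟫_ℂ ^ 2 ≤ ‖a‖ ^ 2 * ‖b‖ ^ 2 := by
  have h := pow_le_pow_left₀ (norm_nonneg _) (norm_inner_le_norm (𝕜 := ℂ) a b) 2
  rw [inner_smul_right, ← Complex.normSq_eq_norm_sq, Complex.normSq_apply] at *
  simp only [Complex.mul_re, I_re, I_im]
  nlinarith

theorem HasDerivAt.hasLineDerivAt_real {g : ℂ → E} {g' : E} {z : ℂ} (h : HasDerivAt g g' z)
    (v : ℂ) : HasLineDerivAt ℝ g (v • g') z v := by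
  simpa using (h.hasFDerivAt.restrictScalars ℝ).hasLineDerivAt v

/-- For holomorphic `f`, `logNormSqLineDeriv f v` and `logNormSqLineDeriv2 f v` are the first and
second derivatives of `log ‖f‖²` along direction `v`. -/
noncomputable def logNormSqLineDeriv (f : ℂ → E) (v z : ℂ) : ℝ :=
  2 * re ⟪f z, v • deriv f z⟫_ℂ / ‖f z‖ ^ 2

noncomputable def logNormSqLineDeriv2 (f : ℂ → E) (v z : ℂ) : ℝ :=
  2 * (re ⟪f z, v • v • deriv (deriv f) z⟫_ℂ + ‖v • deriv f z‖ ^ 2) / ‖f z‖ ^ 2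
    - logNormSqLineDeriv f v z ^ 2

variable {f : ℂ → E} {U : Set ℂ} {z : ℂ}

theorem hasLineDerivAt_log_norm_sq (hf : DifferentiableAt ℂ f z) (h0 : f z ≠ 0) (v : ℂ) :
    HasLineDerivAt ℝ (fun w => Real.log (‖f w‖ ^ 2)) (logNormSqLineDeriv f v z) z v := by
  have := (hf.hasDerivAt.hasLineDerivAt_real v).log_norm_sq
  simpa only [HasLineDerivAt, logNormSqLineDeriv, zero_smul, add_zero]
    using this (by simpa using h0)

theorem hasLineDerivAt_logNormSqLineDeriv [CompleteSpace E] (hf : AnalyticAt ℂ f z)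
    (h0 : f z ≠ 0) (v : ℂ) :
    HasLineDerivAt ℝ (logNormSqLineDeriv f v) (logNormSqLineDeriv2 f v z) z v := by
  have hγ : HasDerivAt (fun t : ℝ => f (z + t • v)) (v • deriv f (z + (0 : ℝ) • v)) 0 := by
    rw [zero_smul, add_zero]
    exact hf.differentiableAt.hasDerivAt.hasLineDerivAt_real v
  have hγ₁ : HasDerivAt (fun t : ℝ => v • deriv f (z + t • v)) (v • v • deriv (deriv f) z) 0 :=
    (hf.deriv.differentiableAt.hasDerivAt.hasLineDerivAt_real v).const_smul v
  simpa only [HasLineDerivAt, logNormSqLineDeriv, logNormSqLineDeriv2, zero_smul, add_zero]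
    using hγ.re_inner_div_norm_sq hγ₁ (by simpa using h0)

theorem logNormSqLineDeriv2_one_add_I_nonneg (f : ℂ → E) (z : ℂ) :
    0 ≤ logNormSqLineDeriv2 f 1 z + logNormSqLineDeriv2 f I z := by
  rcases eq_or_ne (f z) 0 with h0 | h0
  · simp [logNormSqLineDeriv2, logNormSqLineDeriv, h0]
  have hCS := sub_nonneg.2 (re_inner_sq_add_re_inner_I_smul_sq_le (f z) (deriv f z))
  have key : 0 ≤ 4 * (‖f z‖ ^ 2 * ‖deriv f z‖ ^ 2
      - (re ⟪f z, deriv f z⟫_ℂ ^ 2 + re ⟪f z, I • deriv f z⟫_ℂ ^ 2)) / (‖f z‖ ^ 2) ^ 2 := by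
    positivity
  convert key using 1
  simp only [logNormSqLineDeriv2, logNormSqLineDeriv, one_smul, smul_smul, I_mul_I, neg_one_smul,
    inner_neg_right, neg_re, norm_smul, norm_I, one_mul]
  field_simp
  ring

theorem continuousOn_logNormSqLineDeriv [CompleteSpace E] (hf : AnalyticOnNhd ℂ f U)
    (h0 : ∀ z ∈ U, f z ≠ 0) (v : ℂ) : ContinuousOn (logNormSqLineDeriv f v) U := by
  have hc := hf.continuousOn
  have hc' := hf.deriv.continuousOn
  exact ContinuousOn.div (by fun_prop) (by fun_prop) fun z hz => by simpa using h0 z hz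

theorem continuousOn_logNormSqLineDeriv2 [CompleteSpace E] (hf : AnalyticOnNhd ℂ f U)
    (h0 : ∀ z ∈ U, f z ≠ 0) (v : ℂ) : ContinuousOn (logNormSqLineDeriv2 f v) U := by
  have hc := hf.continuousOn
  have hc' := hf.deriv.continuousOn
  have hc'' := hf.deriv.deriv.continuousOn
  exact (ContinuousOn.div (by fun_prop) (by fun_prop) fun z hz => by simpa using h0 z hz).sub
    ((continuousOn_logNormSqLineDeriv hf h0 v).pow 2)

theorem logNormSqLineDeriv_add_one (hper : ∀ z, f (z + 1) = f z) (v z : ℂ) :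
    logNormSqLineDeriv f v (z + 1) = logNormSqLineDeriv f v z := by
  have : deriv f (z + 1) = deriv f z := by
    rw [← deriv_comp_add_const, funext hper]
  simp only [logNormSqLineDeriv, hper, this]

theorem convexOn_integral_log_norm [CompleteSpace E] {δ : ℝ}
    (hf : DifferentiableOn ℂ f (horizontalStrip δ)) (hper : ∀ z, f (z + 1) = f z)
    (h0 : ∀ z ∈ horizontalStrip δ, f z ≠ 0) :
    ConvexOn ℝ (Ioo (-δ) δ) (fun ε : ℝ => ∫ x in (0:ℝ)..1, Real.log ‖f (x + ε * I)‖) := by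
  have hf := hf.analyticOnNhd (isOpen_horizontalStrip δ)
  have hlog : ContinuousOn (fun w => Real.log (‖f w‖ ^ 2)) (horizontalStrip δ) :=
    (hf.continuousOn.norm.pow 2).log fun z hz => by simpa using h0 z hz
  have hconv := convexOn_integral_horizontal_of_laplacian_nonneg hlog
    (continuousOn_logNormSqLineDeriv hf h0 I) (continuousOn_logNormSqLineDeriv2 hf h0 I)
    (continuousOn_logNormSqLineDeriv2 hf h0 1)
    (fun z hz => hasLineDerivAt_log_norm_sq (hf z hz).differentiableAt (h0 z hz) I)
    (fun z hz => hasLineDerivAt_logNormSqLineDeriv (hf z hz) (h0 z hz) I)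
    (fun z hz => hasLineDerivAt_logNormSqLineDeriv (hf z hz) (h0 z hz) 1)
    (logNormSqLineDeriv_add_one hper 1) (fun z _ => logNormSqLineDeriv2_one_add_I_nonneg f z)
  refine (hconv.smul (by norm_num : (0:ℝ) ≤ 2⁻¹)).congr fun ε _ => ?_
  simp only [Real.log_pow, smul_eq_mul, ← intervalIntegral.integral_const_mul]
  congr 1
  ext x
  push_cast
  ring

end LogNormSq

section Frobenius

open scoped Matrix.Norms.Frobenius

theorem mnorm_eq_frobenius_norm (B : Matrix (Fin 2) (Fin 2) ℂ) : mnorm B = ‖B‖ := by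
  rw [mnorm, Matrix.frobenius_norm_def, Real.sqrt_eq_rpow]
  simp

theorem mnorm_mul_le (B C : Matrix (Fin 2) (Fin 2) ℂ) : mnorm (B * C) ≤ mnorm B * mnorm C := by
  simpa only [mnorm_eq_frobenius_norm] using Matrix.frobenius_norm_mul B C

end Frobenius

theorem mnorm_nonneg (B : Matrix (Fin 2) (Fin 2) ℂ) : 0 ≤ mnorm B := Real.sqrt_nonneg _

theorem mnorm_eq_norm_toLp (B : Matrix (Fin 2) (Fin 2) ℂ) :
    mnorm B = ‖(WithLp.toLp 2 (Function.uncurry B) : EuclideanSpace ℂ (Fin 2 × Fin 2))‖ := by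
  rw [mnorm, EuclideanSpace.norm_eq, Fintype.sum_prod_type]
  rfl

theorem one_le_mnorm_of_det_eq_one {B : Matrix (Fin 2) (Fin 2) ℂ} (h : B.det = 1) :
    1 ≤ mnorm B := by
  have hdet : 1 ≤ ‖B 0 0‖ * ‖B 1 1‖ + ‖B 0 1‖ * ‖B 1 0‖ := by
    calc (1 : ℝ) = ‖B 0 0 * B 1 1 - B 0 1 * B 1 0‖ := by rw [← Matrix.det_fin_two, h, norm_one]
      _ ≤ _ := by simpa only [norm_mul] using norm_sub_le (B 0 0 * B 1 1) (B 0 1 * B 1 0)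
  rw [mnorm, Real.one_le_sqrt]
  simp only [Fin.sum_univ_two]
  nlinarith [sq_nonneg (‖B 0 0‖ - ‖B 1 1‖), sq_nonneg (‖B 0 1‖ - ‖B 1 0‖)]

noncomputable def holCocycle {m : Type*} [Fintype m] [DecidableEq m] (A : ℂ → Matrix m m ℂ)
    (α : ℝ) : ℕ → ℂ → Matrix m m ℂ
  | 0, _ => 1
  | n + 1, z => A (z + n * α) * holCocycle A α n z

theorem cocycle_succ (A : ℝ → Matrix (Fin 2) (Fin 2) ℂ) (α : ℝ) (n : ℕ) (x : ℝ) :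
    cocycle A α (n + 1) x = A (x + n * α) * cocycle A α n x := by
  simp [cocycle, List.range_succ]

theorem cocycle_eq_holCocycle (A : ℂ → Matrix (Fin 2) (Fin 2) ℂ) (α ε : ℝ) (n : ℕ) (x : ℝ) :
    cocycle (fun x : ℝ => A (x + ε * I)) α n x = holCocycle A α n (x + ε * I) := by
  induction n with
  | zero => simp [cocycle, holCocycle]
  | succ n ih =>
    rw [cocycle_succ, ih, holCocycle]
    congr 2
    push_cast
    ring

section HolCocycle

variable {m : Type*} [Fintype m] [DecidableEq m] {A : ℂ → Matrix m m ℂ} {α : ℝ} {U : Set ℂ}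

theorem holCocycle_add_one (hper : ∀ z, A (z + 1) = A z) (n : ℕ) (z : ℂ) :
    holCocycle A α n (z + 1) = holCocycle A α n z := by
  induction n with
  | zero => rfl
  | succ n ih => rw [holCocycle, holCocycle, ih, add_right_comm, hper]

theorem differentiableOn_holCocycle_apply (hU : ∀ z ∈ U, ∀ x : ℝ, z + x ∈ U)
    (hA : ∀ i j, DifferentiableOn ℂ (fun z => A z i j) U) (n : ℕ) (i j : m) :
    DifferentiableOn ℂ (fun z => holCocycle A α n z i j) U := by
  induction n generalizing i j with
  | zero => simp [holCocycle]
  | succ n ih =>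
    simp only [holCocycle, Matrix.mul_apply]
    refine DifferentiableOn.fun_sum fun k _ => DifferentiableOn.mul ?_ (ih k j)
    exact (hA i k).comp (by fun_prop) fun z hz => by simpa using hU z hz (n * α)

theorem det_holCocycle (hU : ∀ z ∈ U, ∀ x : ℝ, z + x ∈ U) (hdet : ∀ z ∈ U, (A z).det = 1)
    (n : ℕ) {z : ℂ} (hz : z ∈ U) : (holCocycle A α n z).det = 1 := by
  induction n with
  | zero => simp [holCocycle]
  | succ n ih =>
    rw [holCocycle, Matrix.det_mul, ih, mul_one]
    exact_mod_cast hdet _ (hU z hz (n * α))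

end HolCocycle

section HolCocycleFinTwo

variable {A : ℂ → Matrix (Fin 2) (Fin 2) ℂ} {α : ℝ} {U : Set ℂ}

theorem mnorm_holCocycle_le (hU : ∀ z ∈ U, ∀ x : ℝ, z + x ∈ U) {C : ℝ}
    (hbd : ∀ z ∈ U, mnorm (A z) ≤ C) (n : ℕ) {z : ℂ} (hz : z ∈ U) :
    mnorm (holCocycle A α n z) ≤ mnorm 1 * C ^ n := by
  induction n with
  | zero => simp [holCocycle]
  | succ n ih =>
    have hA : mnorm (A (z + n * α)) ≤ C := by exact_mod_cast hbd _ (hU z hz (n * α))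
    calc mnorm (holCocycle A α (n + 1) z)
        ≤ mnorm (A (z + n * α)) * mnorm (holCocycle A α n z) := mnorm_mul_le _ _
      _ ≤ C * (mnorm 1 * C ^ n) :=
        mul_le_mul hA ih (mnorm_nonneg _) ((mnorm_nonneg _).trans hA)
      _ = mnorm 1 * C ^ (n + 1) := by ring

theorem log_mnorm_holCocycle_mem_Icc (hU : ∀ z ∈ U, ∀ x : ℝ, z + x ∈ U)
    (hdet : ∀ z ∈ U, (A z).det = 1) {C : ℝ} (hbd : ∀ z ∈ U, mnorm (A z) ≤ C) (n : ℕ) {z : ℂ}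
    (hz : z ∈ U) :
    Real.log (mnorm (holCocycle A α n z)) ∈ Icc 0 (Real.log (mnorm 1) + n * Real.log C) := by
  have hone := one_le_mnorm_of_det_eq_one (det_holCocycle (α := α) hU hdet n hz)
  have hC : 0 < C := zero_lt_one.trans_le <|
    (one_le_mnorm_of_det_eq_one (hdet z hz)).trans (hbd z hz)
  have hM : 0 < mnorm 1 := zero_lt_one.trans_le (one_le_mnorm_of_det_eq_one Matrix.det_one)
  refine ⟨Real.log_nonneg hone, ?_⟩
  rw [← Real.log_pow, ← Real.log_mul hM.ne' (by positivity)]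
  exact Real.log_le_log (by positivity) (mnorm_holCocycle_le hU hbd n hz)

end HolCocycleFinTwo

theorem convexOn_integral_log_mnorm_holCocycle {A : ℂ → Matrix (Fin 2) (Fin 2) ℂ} {α δ : ℝ}
    (hA : ∀ i j, DifferentiableOn ℂ (fun z => A z i j) (horizontalStrip δ))
    (hper : ∀ z, A (z + 1) = A z) (hdet : ∀ z ∈ horizontalStrip δ, (A z).det = 1) (n : ℕ) :
    ConvexOn ℝ (Ioo (-δ) δ)
      (fun ε : ℝ => ∫ x in (0:ℝ)..1, Real.log (mnorm (holCocycle A α n (x + ε * I)))) := by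
  have hU := fun z (hz : z ∈ horizontalStrip δ) x => add_ofReal_mem_horizontalStrip hz x
  simp only [mnorm_eq_norm_toLp]
  refine convexOn_integral_log_norm (f := fun z => (WithLp.toLp 2 (Function.uncurry
    (holCocycle A α n z)) : EuclideanSpace ℂ (Fin 2 × Fin 2))) ?_
    (fun z => by rw [holCocycle_add_one hper]) fun z hz => ?_
  · exact differentiableOn_euclidean.mpr fun p =>
      differentiableOn_holCocycle_apply hU hA n p.1 p.2
  · rw [← norm_pos_iff, ← mnorm_eq_norm_toLp]
    exact zero_lt_one.trans_le (one_le_mnorm_of_det_eq_one (det_holCocycle hU hdet n hz))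

theorem intervalIntegral_zero_one_mem_Icc {g : ℝ → ℝ} {b : ℝ} (hg : ∀ x, g x ∈ Icc 0 b) :
    ∫ x in (0:ℝ)..1, g x ∈ Icc 0 b := by
  have h0 : 0 ≤ ∫ x in (0:ℝ)..1, g x :=
    intervalIntegral.integral_nonneg zero_le_one fun x _ => (hg x).1
  have := intervalIntegral.norm_integral_le_of_norm_le_const (a := 0) (b := 1) (C := b)
    fun x _ => by rw [Real.norm_of_nonneg (hg x).1]; exact (hg x).2
  exact ⟨h0, by simpa [abs_of_nonneg h0] using this⟩

theorem inv_mul_le_add_of_le_add_mul {t a b : ℝ} (ha : 0 ≤ a) {n : ℕ} (hn : 0 < n)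
    (ht : t ≤ a + n * b) : (n : ℝ)⁻¹ * t ≤ a + b := by
  have hn : (1 : ℝ) ≤ n := by exact_mod_cast hn
  calc (n : ℝ)⁻¹ * t ≤ (n : ℝ)⁻¹ * (a + n * b) := by gcongr
    _ = (n : ℝ)⁻¹ * a + b := by field_simp
    _ ≤ a + b := by gcongr; exact mul_le_of_le_one_left ha (inv_le_one_of_one_le₀ hn)

theorem lyapunov_convex_in_strip_general (α δ : ℝ)
    (A : ℂ → Matrix (Fin 2) (Fin 2) ℂ)
    (hholo : ∀ i j, DifferentiableOn ℂ (fun z => A z i j) {z : ℂ | |z.im| < δ})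
    (hbd : ∃ C : ℝ, ∀ z : ℂ, |z.im| < δ → mnorm (A z) ≤ C)
    (hper : ∀ z : ℂ, A (z + 1) = A z)
    (hdet : ∀ z : ℂ, |z.im| < δ → (A z).det = 1) :
    ConvexOn ℝ (Set.Ioo (-δ) δ)
      (fun ε : ℝ => lyap α (fun x : ℝ => A (x + ε * Complex.I))) := by
  obtain ⟨C, hC⟩ := hbd
  have hU := fun z (hz : z ∈ horizontalStrip δ) (x : ℝ) => add_ofReal_mem_horizontalStrip hz x
  have hbound : ∀ ε ∈ Ioo (-δ) δ, ∀ n : ℕ, 0 < n →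
      (n : ℝ)⁻¹ * ∫ x in (0:ℝ)..1, Real.log (mnorm (holCocycle A α n (x + ε * I)))
        ∈ Icc 0 (Real.log (mnorm 1) + Real.log C) := by
    intro ε hε n hn
    obtain ⟨h0, h1⟩ := intervalIntegral_zero_one_mem_Icc fun x =>
      log_mnorm_holCocycle_mem_Icc (α := α) hU hdet hC n (ofReal_add_mul_I_mem_horizontalStrip hε x)
    exact ⟨by positivity, inv_mul_le_add_of_le_add_mul
      (Real.log_nonneg (one_le_mnorm_of_det_eq_one Matrix.det_one)) hn h1⟩
  simp only [lyap, cocycle_eq_holCocycle]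
  exact ConvexOn.limsup (Eventually.of_forall fun n =>
      (convexOn_integral_log_mnorm_holCocycle hholo hper hdet n).smul (inv_nonneg.2 n.cast_nonneg))
    (fun ε hε => isBoundedUnder_of_eventually_le <|
      (eventually_gt_atTop 0).mono fun n hn => (hbound ε hε n hn).2)
    (fun ε hε => isBoundedUnder_of_eventually_ge <|
      (eventually_gt_atTop 0).mono fun n hn => (hbound ε hε n hn).1)

/-- For an analytic cocycle A with bounded holomorphic extension to |Im z| < δ,
the function ε ↦ L(α, A_ε) is convex on (-δ, δ). -/
theorem lyapunov_convex_in_strip (α δ : ℝ) (hδ : 0 < δ)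
    (A : ℂ → Matrix (Fin 2) (Fin 2) ℂ)
    (hholo : ∀ i j, DifferentiableOn ℂ (fun z => A z i j) {z : ℂ | |z.im| < δ})
    (hbd : ∃ C : ℝ, ∀ z : ℂ, |z.im| < δ → mnorm (A z) ≤ C)
    (hper : ∀ z : ℂ, A (z + 1) = A z)
    (hdet : ∀ z : ℂ, |z.im| < δ → (A z).det = 1) :
    ConvexOn ℝ (Set.Ioo (-δ) δ)
      (fun ε : ℝ => lyap α (fun x : ℝ => A (x + ε * Complex.I))) :=
  lyapunov_convex_in_strip_general α δ A hholo hbd hper hdet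
end
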